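/- arXiv:2409.02221 — 10 statements merged into one kernel-verified Lean document; each statement's English description precedes it below -/
import Mathlib

section
/- Let G be a bipartite graph with vertex classes X and Y, with no isolated vertices in X. Let F = {N(y) : y ∈ Y} and let ⟨F⟩ be the union-closed family generated by F (all unions of subfamilies of F, including the empty union). Then a vertex x ∈ X lies in at most half of the maximal stable sets of G if and only if x lies in at least half of the members of ⟨F⟩. -/
/-- A stable (independent) set of vertices. -/
def IsStable {V : Type*} (G : SimpleGraph V) (S : Finset V) : Prop :=
  ∀ a ∈ S, ∀ b ∈ S, ¬ G.Adj a b

/-- A maximal stable set. -/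
def IsMaxStable {V : Type*} (G : SimpleGraph V) (S : Finset V) : Prop :=
  IsStable G S ∧ ∀ T : Finset V, IsStable G T → S ⊆ T → S = T

/-- The number of maximal stable sets of `G`. -/
noncomputable def numMaxStable {V : Type*} (G : SimpleGraph V) : ℕ :=
  Set.ncard {S : Finset V | IsMaxStable G S}

/-- The number of maximal stable sets of `G` containing `v`. -/
noncomputable def numMaxStableCont {V : Type*} (G : SimpleGraph V) (v : V) : ℕ :=
  Set.ncard {S : Finset V | IsMaxStable G S ∧ v ∈ S}

/-- The neighborhood of a set of vertices. -/
def nbhdSet {V : Type*} (G : SimpleGraph V) (P : Set V) : Set V :=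
  {w | ∃ p ∈ P, G.Adj p w}

/-- A pendant vertex: a vertex of degree exactly 1. -/
def IsPendant {V : Type*} (G : SimpleGraph V) (u : V) : Prop :=
  ∃! w, G.Adj u w

/-- A 2-layered vertex: every neighbor is adjacent to some pendant vertex. -/
def TwoLayered {V : Type*} (G : SimpleGraph V) (v : V) : Prop :=
  ∀ w, G.Adj v w → ∃ p, G.Adj w p ∧ IsPendant G p

/-- A maximal stable set of the subgraph of `G` induced on the vertex set `A`. -/
def IsMaxStableIn {V : Type*} (G : SimpleGraph V) (A : Set V) (S : Finset V) : Prop :=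
  ↑S ⊆ A ∧ IsStable G S ∧
    ∀ T : Finset V, ↑T ⊆ A → IsStable G T → S ⊆ T → S = T

/-!
For a maximal stable set `S` of the bipartite graph, every vertex of `X \ S` has a neighbour in
`S ∩ Y`, so `X \ S = N(S ∩ Y)` lies in `⟨F⟩`. Conversely every `N(Y')` with `Y' ⊆ Y` arises this
way: extend the stable set `(X \ N(Y')) ∪ Y'` to a maximal one. A maximal stable set is determined
by its trace on `X`, so `S ↦ X \ S` is a bijection from the maximal stable sets onto `⟨F⟩` under
which `x ∉ S` corresponds to `x ∈ X \ S`. Hence `|⟨F⟩|` is the number of maximal stable sets and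
the members of `⟨F⟩` containing `x` are as many as the maximal stable sets avoiding `x`.
-/

section

variable {V : Type*} {G : SimpleGraph V}

theorem exists_maxStable_superset [Finite V] {T : Finset V} (hT : IsStable G T) :
    ∃ S, T ⊆ S ∧ IsMaxStable G S := by
  obtain ⟨S, hTS, hS⟩ := Finite.exists_le_maximal (p := IsStable G) hT
  exact ⟨S, hTS, hS.prop, fun U hU hSU => le_antisymm hSU (hS.2 hU hSU)⟩

theorem IsMaxStable.exists_adj_of_notMem {S : Finset V} (hS : IsMaxStable G S) {v : V}
    (hv : v ∉ S) : ∃ b ∈ S, G.Adj v b := by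
  classical
  by_contra! hcon
  have hstab : IsStable G (insert v S) := by
    intro a ha b hb hab
    rw [Finset.mem_insert] at ha hb
    rcases ha with rfl | ha <;> rcases hb with rfl | hb
    · exact G.loopless.irrefl _ hab
    · exact hcon b hb hab
    · exact hcon a ha hab.symm
    · exact hS.1 a ha b hb hab
  exact hv (hS.2 _ hstab (Finset.subset_insert _ _) ▸ Finset.mem_insert_self v S)

theorem numMaxStable_eq_add [Finite V] (G : SimpleGraph V) (v : V) :
    numMaxStable G = numMaxStableCont G v + {S : Finset V | IsMaxStable G S ∧ v ∉ S}.ncard :=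
  (Set.ncard_inter_add_ncard_sdiff_eq_ncard {S | IsMaxStable G S} {S | v ∈ S}).symm

section Bipartite

variable {X Y : Set V} (hdisj : Disjoint X Y)
  (hbip : ∀ a b, G.Adj a b → (a ∈ X ∧ b ∈ Y) ∨ (a ∈ Y ∧ b ∈ X))
include hdisj hbip

theorem mem_right_of_adj {a b : V} (ha : a ∈ X) (hab : G.Adj a b) : b ∈ Y := by
  rcases hbip a b hab with ⟨_, h⟩ | ⟨h, _⟩
  · exact h
  · exact absurd ha (Set.disjoint_right.1 hdisj h)

theorem mem_left_of_adj {a b : V} (ha : a ∈ Y) (hab : G.Adj a b) : b ∈ X := by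
  rcases hbip a b hab with ⟨h, _⟩ | ⟨_, h⟩
  · exact absurd ha (Set.disjoint_left.1 hdisj h)
  · exact h

theorem IsMaxStable.diff_eq_nbhdSet {S : Finset V} (hS : IsMaxStable G S) :
    X \ ↑S = nbhdSet G (↑S ∩ Y) := by
  ext a
  constructor
  · rintro ⟨haX, haS⟩
    obtain ⟨b, hbS, hab⟩ := hS.exists_adj_of_notMem haS
    exact ⟨b, ⟨hbS, mem_right_of_adj hdisj hbip haX hab⟩, hab.symm⟩
  · rintro ⟨p, ⟨hpS, hpY⟩, hpa⟩
    exact ⟨mem_left_of_adj hdisj hbip hpY hpa, fun haS => hS.1 p hpS a haS hpa⟩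

theorem isStable_of_coe_eq_diff_nbhdSet_union {Y' : Set V} (hY' : Y' ⊆ Y) {T : Finset V}
    (hT : ↑T = (X \ nbhdSet G Y') ∪ Y') : IsStable G T := by
  intro a ha b hb hab
  rw [← Finset.mem_coe, hT] at ha hb
  rcases ha with ⟨haX, haN⟩ | haY <;> rcases hb with ⟨hbX, hbN⟩ | hbY
  · exact Set.disjoint_left.1 hdisj hbX (mem_right_of_adj hdisj hbip haX hab)
  · exact haN ⟨b, hbY, hab.symm⟩
  · exact hbN ⟨a, haY, hab⟩
  · exact Set.disjoint_left.1 hdisj (mem_left_of_adj hdisj hbip (hY' haY) hab) (hY' hbY)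

theorem exists_maxStable_diff_eq [Finite V] {Y' : Set V} (hY' : Y' ⊆ Y) :
    ∃ S : Finset V, IsMaxStable G S ∧ X \ ↑S = nbhdSet G Y' := by
  have hT := ((X \ nbhdSet G Y') ∪ Y').toFinite.coe_toFinset
  obtain ⟨S, hTS, hS⟩ :=
    exists_maxStable_superset (isStable_of_coe_eq_diff_nbhdSet_union hdisj hbip hY' hT)
  replace hTS : (X \ nbhdSet G Y') ∪ Y' ⊆ ↑S := hT ▸ Finset.coe_subset.2 hTS
  refine ⟨S, hS, Set.Subset.antisymm ?_ ?_⟩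
  · rintro a ⟨haX, haS⟩
    by_contra haN
    exact haS (hTS (Or.inl ⟨haX, haN⟩))
  · rintro a ⟨p, hp, hpa⟩
    exact ⟨mem_left_of_adj hdisj hbip (hY' hp) hpa, fun haS => hS.1 p (hTS (Or.inr hp)) a haS hpa⟩

theorem image_diff_maxStable [Finite V] :
    (fun S : Finset V => X \ ↑S) '' {S | IsMaxStable G S} =
      {A | ∃ Y' ⊆ Y, A = nbhdSet G Y'} := by
  ext A
  constructor
  · rintro ⟨S, hS, rfl⟩
    exact ⟨↑S ∩ Y, Set.inter_subset_right, hS.diff_eq_nbhdSet hdisj hbip⟩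
  · rintro ⟨Y', hY', rfl⟩
    obtain ⟨S, hS, hSY'⟩ := exists_maxStable_diff_eq hdisj hbip hY'
    exact ⟨S, hS, hSY'⟩

theorem injOn_diff_maxStable (hcov : X ∪ Y = Set.univ) :
    Set.InjOn (fun S : Finset V => X \ ↑S) {S | IsMaxStable G S} := by
  intro S hS T hT hST
  have hXST : X ∩ ↑S = X ∩ ↑T := by
    simpa only [Set.sdiff_sdiff_right_self] using congrArg (X \ ·) hST
  -- a vertex of `S ∩ Y` outside `T` would need a neighbour in `T ∩ X = S ∩ X`
  have hsub : S ⊆ T := by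
    intro v hvS
    by_contra hvT
    obtain ⟨b, hbT, hvb⟩ := hT.exists_adj_of_notMem hvT
    rcases (hcov ▸ Set.mem_univ v : v ∈ X ∪ Y) with hvX | hvY
    · exact hvT (hXST ▸ ⟨hvX, hvS⟩ : v ∈ X ∩ ↑T).2
    · have hbS : b ∈ X ∩ ↑S := hXST ▸ ⟨mem_left_of_adj hdisj hbip hvY hvb, hbT⟩
      exact hS.1 v hvS b hbS.2 hvb
  exact hS.2 T hT.1 hsub

end Bipartite

end

theorem stmt_2_general {V : Type*} [Fintype V] (G : SimpleGraph V) (X Y : Set V)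
    (hdisj : Disjoint X Y) (hcov : X ∪ Y = Set.univ)
    (hbip : ∀ a b, G.Adj a b → (a ∈ X ∧ b ∈ Y) ∨ (a ∈ Y ∧ b ∈ X))
    (x : V) (hx : x ∈ X) :
    (2 * numMaxStableCont G x ≤ numMaxStable G) ↔
      (Set.ncard {A : Set V | ∃ Y' ⊆ Y, A = nbhdSet G Y'} ≤
        2 * Set.ncard {A : Set V | (∃ Y' ⊆ Y, A = nbhdSet G Y') ∧ x ∈ A}) := by
  set f := fun S : Finset V => X \ (S : Set V)
  have hinj := injOn_diff_maxStable hdisj hbip hcov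
  have himg := image_diff_maxStable (G := G) hdisj hbip
  have hall : {A | ∃ Y' ⊆ Y, A = nbhdSet G Y'}.ncard = numMaxStable G := by
    rw [← himg, hinj.ncard_image]
    rfl
  have hmem : {A | (∃ Y' ⊆ Y, A = nbhdSet G Y') ∧ x ∈ A}.ncard =
      {S : Finset V | IsMaxStable G S ∧ x ∉ S}.ncard := by
    have hpre : {S : Finset V | IsMaxStable G S ∧ x ∉ S} =
        {S | IsMaxStable G S} ∩ f ⁻¹' {A | x ∈ A} := by
      ext S
      simp [f, hx]
    rw [hpre, ← (hinj.mono Set.inter_subset_left).ncard_image,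
      Set.image_inter_preimage, himg]
    rfl
  rw [hall, hmem, numMaxStable_eq_add G x]
  omega

theorem stmt_2 {V : Type*} [Fintype V] [DecidableEq V] (G : SimpleGraph V) (X Y : Set V)
    (hdisj : Disjoint X Y) (hcov : X ∪ Y = Set.univ)
    (hbip : ∀ a b, G.Adj a b → (a ∈ X ∧ b ∈ Y) ∨ (a ∈ Y ∧ b ∈ X))
    (hiso : ∀ x ∈ X, ∃ y, G.Adj x y)
    (x : V) (hx : x ∈ X) :
    (2 * numMaxStableCont G x ≤ numMaxStable G) ↔
      (Set.ncard {A : Set V | ∃ Y' ⊆ Y, A = nbhdSet G Y'} ≤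
        2 * Set.ncard {A : Set V | (∃ Y' ⊆ Y, A = nbhdSet G Y') ∧ x ∈ A}) :=
  stmt_2_general G X Y hdisj hcov hbip x hx
end

section
/- Let C be a finite graph, Θ ⊆ [n] ⊆ V(C), and Γ1, Γ2 ⊆ [n] \ Θ with Γ1 ≠ Γ2. Then no set B can simultaneously be a maximal stable set of C \ Γ1 containing Θ and avoiding ([n]\Θ) ∪ N_C(Γ1), and a maximal stable set of C \ Γ2 containing Θ and avoiding ([n]\Θ) ∪ N_C(Γ2). -/
lemma key_10 {V : Type*} [DecidableEq V] (C : SimpleGraph V)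
    (IΘ Γ1 Γ2 B : Finset V)
    (hst : IsStable C B)
    (hdj : Disjoint (↑B : Set V) ((↑IΘ : Set V) ∪ nbhdSet C ↑Γ1))
    (h2 : IsMaxStableIn C (Set.univ \ ↑Γ2) B)
    (v : V) (hv1 : v ∈ Γ1) (hv2 : v ∉ Γ2) (hvI : v ∈ IΘ) : False := by
  have hvB : v ∉ B := fun h =>
    Set.disjoint_left.mp hdj (by exact_mod_cast h) (Or.inl (by exact_mod_cast hvI))
  have hnadj : ∀ b ∈ B, ¬ C.Adj v b := by
    intro b hb hadj
    exact Set.disjoint_left.mp hdj (by exact_mod_cast hb) (Or.inr ⟨v, by exact_mod_cast hv1, hadj⟩)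
  have hTst : IsStable C (insert v B) := by
    intro a ha b hb hadj
    rcases Finset.mem_insert.mp ha with ha | ha <;>
      rcases Finset.mem_insert.mp hb with hb | hb
    · rw [ha, hb] at hadj; exact C.irrefl hadj
    · rw [ha] at hadj; exact hnadj b hb hadj
    · rw [hb] at hadj; exact hnadj a ha hadj.symm
    · exact hst a ha b hb hadj
  have hsub : (↑(insert v B) : Set V) ⊆ Set.univ \ ↑Γ2 := by
    intro a ha
    simp only [Finset.coe_insert, Set.mem_insert_iff] at ha
    rcases ha with rfl | ha
    · exact ⟨trivial, by exact_mod_cast hv2⟩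
    · exact h2.1 ha
  have := h2.2.2 (insert v B) hsub hTst (Finset.subset_insert v B)
  exact hvB (this ▸ Finset.mem_insert_self v B)

theorem stmt_10 {V : Type*} [Fintype V] [DecidableEq V] (C : SimpleGraph V)
    (I : Finset V) (Θ Γ1 Γ2 : Finset V) (hΘ : Θ ⊆ I)
    (hΓ1 : Γ1 ⊆ I \ Θ) (hΓ2 : Γ2 ⊆ I \ Θ) (hne : Γ1 ≠ Γ2) (B : Finset V) :
    ¬ ((IsMaxStableIn C (Set.univ \ ↑Γ1) B ∧ Θ ⊆ B ∧
          Disjoint (↑B : Set V) ((↑(I \ Θ) : Set V) ∪ nbhdSet C ↑Γ1)) ∧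
       (IsMaxStableIn C (Set.univ \ ↑Γ2) B ∧ Θ ⊆ B ∧
          Disjoint (↑B : Set V) ((↑(I \ Θ) : Set V) ∪ nbhdSet C ↑Γ2))) := by
  rintro ⟨⟨h1, hΘ1, hd1⟩, ⟨h2, hΘ2, hd2⟩⟩
  have : ∃ v, (v ∈ Γ1 ∧ v ∉ Γ2) ∨ (v ∈ Γ2 ∧ v ∉ Γ1) := by
    by_contra h
    push_neg at h
    exact hne (Finset.ext fun v => ⟨(h v).1, (h v).2⟩)
  obtain ⟨v, ⟨hv1, hv2⟩ | ⟨hv2, hv1⟩⟩ := this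
  · exact key_10 C (I \ Θ) Γ1 Γ2 B h1.2.1 hd1 h2 v hv1 hv2 (hΓ1 hv1)
  · exact key_10 C (I \ Θ) Γ2 Γ1 B h2.2.1 hd2 h1 v hv2 hv1 (hΓ2 hv2)
end

section
/- Let G be a connected bipartite graph with a decomposition {C, H} into edge-disjoint subgraphs whose union is G, such that all vertices of V(C) ∩ V(H) lie in the same bipartite class of G and are 2-layered in G. Then the number of maximal stable sets satisfies w_G = w_C · w_H. -/
/-- A stable set of a subgraph: contained in its vertex set, no two adjacent in it. -/
def SubIsStable {V : Type*} {G : SimpleGraph V} (C : G.Subgraph) (S : Finset V) : Prop :=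
  ↑S ⊆ C.verts ∧ ∀ a ∈ S, ∀ b ∈ S, ¬ C.Adj a b

/-- A maximal stable set of a subgraph. -/
def SubIsMaxStable {V : Type*} {G : SimpleGraph V} (C : G.Subgraph) (S : Finset V) : Prop :=
  SubIsStable C S ∧ ∀ T : Finset V, SubIsStable C T → S ⊆ T → S = T

/-- The number of maximal stable sets of a subgraph. -/
noncomputable def subNumMaxStable {V : Type*} {G : SimpleGraph V} (C : G.Subgraph) : ℕ :=
  Set.ncard {S : Finset V | SubIsMaxStable C S}

/-- The number of maximal stable sets of a subgraph containing `v`. -/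
noncomputable def subNumMaxStableCont {V : Type*} {G : SimpleGraph V} (C : G.Subgraph) (v : V) : ℕ :=
  Set.ncard {S : Finset V | SubIsMaxStable C S ∧ v ∈ S}

section Aux

open scoped Classical

variable {V : Type*} [Fintype V]

/-- Map a maximal stable set of `G` to one of the subgraph `C`. -/
noncomputable def phiMS (G : SimpleGraph V) (C : G.Subgraph) (I : Set V) (S : Finset V) :
    Finset V :=
  Finset.univ.filter (fun v => (v ∈ S ∧ v ∈ C.verts) ∨ (v ∈ I ∧ ∀ w, C.Adj v w → w ∉ S))

/-- Combine maximal stable sets of the two subgraphs. -/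
noncomputable def psiMS (I : Set V) (A B : Finset V) : Finset V :=
  Finset.univ.filter (fun v =>
    (v ∈ A ∧ v ∉ I) ∨ (v ∈ B ∧ v ∉ I) ∨ (v ∈ A ∧ v ∈ B ∧ v ∈ I))

lemma mem_phiMS {G : SimpleGraph V} {C : G.Subgraph} {I : Set V} {S : Finset V} {v : V} :
    v ∈ phiMS G C I S ↔ (v ∈ S ∧ v ∈ C.verts) ∨ (v ∈ I ∧ ∀ w, C.Adj v w → w ∉ S) := by
  simp [phiMS]

lemma mem_psiMS {I : Set V} {A B : Finset V} {v : V} :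
    v ∈ psiMS I A B ↔ (v ∈ A ∧ v ∉ I) ∨ (v ∈ B ∧ v ∉ I) ∨ (v ∈ A ∧ v ∈ B ∧ v ∈ I) := by
  simp [psiMS]

lemma psiMS_comm {I : Set V} {A B : Finset V} : psiMS I A B = psiMS I B A := by
  ext v; simp only [mem_psiMS]; tauto

variable [DecidableEq V]

lemma maxG_exists {G : SimpleGraph V} {S : Finset V} (hS : IsMaxStable G S) {x : V}
    (hx : x ∉ S) : ∃ y ∈ S, G.Adj x y := by
  by_contra hcon
  push_neg at hcon
  have hstab : IsStable G (insert x S) := by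
    intro a ha b hb
    rcases Finset.mem_insert.1 ha with ha' | ha'
    · subst ha'
      rcases Finset.mem_insert.1 hb with hb' | hb'
      · subst hb'; simp
      · exact hcon b hb'
    · rcases Finset.mem_insert.1 hb with hb' | hb'
      · subst hb'; exact fun h => hcon a ha' h.symm
      · exact hS.1 a ha' b hb'
  have := hS.2 _ hstab (Finset.subset_insert _ _)
  exact hx (this ▸ Finset.mem_insert_self x S)

lemma maxSub_exists {G : SimpleGraph V} {C : G.Subgraph} {A : Finset V}
    (hA : SubIsMaxStable C A) {x : V} (hx : x ∈ C.verts) (hxA : x ∉ A) :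
    ∃ y ∈ A, C.Adj x y := by
  by_contra hcon
  push_neg at hcon
  have hstab : SubIsStable C (insert x A) := by
    refine ⟨?_, ?_⟩
    · rw [Finset.coe_insert]; exact Set.insert_subset hx hA.1.1
    · intro a ha b hb
      rcases Finset.mem_insert.1 ha with ha' | ha'
      · subst ha'
        rcases Finset.mem_insert.1 hb with hb' | hb'
        · subst hb'; exact fun h => h.adj_sub.ne rfl
        · exact hcon b hb'
      · rcases Finset.mem_insert.1 hb with hb' | hb'
        · subst hb'; exact fun h => hcon a ha' h.symm
        · exact hA.1.2 a ha' b hb'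
  have := hA.2 _ hstab (Finset.subset_insert _ _)
  exact hxA (this ▸ Finset.mem_insert_self x A)

lemma pend_mem {G : SimpleGraph V} {C : G.Subgraph} {A : Finset V}
    (hA : SubIsMaxStable C A) {x p : V} (hxp : C.Adj x p)
    (huniq : ∀ z, G.Adj p z → z = x) (hxA : x ∉ A) : p ∈ A := by
  by_contra hp
  obtain ⟨y, hyA, hpy⟩ := maxSub_exists hA hxp.symm.fst_mem hp
  exact hxA ((huniq y hpy.adj_sub) ▸ hyA)

lemma case_I {G : SimpleGraph V} {C : G.Subgraph} {A : Finset V} {X I : Set V}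
    (hbi : ∀ a b, G.Adj a b → a ∈ X → b ∉ X) (hX : I ⊆ X)
    (hA : SubIsMaxStable C A) {x : V} (hxI : x ∈ I) (hxC : x ∈ C.verts) (hxA : x ∉ A) :
    ∃ y, y ∈ A ∧ y ∉ I ∧ C.Adj x y := by
  obtain ⟨y, hyA, hxy⟩ := maxSub_exists hA hxC hxA
  exact ⟨y, hyA, fun hyI => hbi x y hxy.adj_sub (hX hxI) (hX hyI), hxy⟩

lemma case_side {G : SimpleGraph V} {C H : G.Subgraph} {A : Finset V} {I : Set V}
    (hCH : ∀ a b, G.Adj a b ↔ C.Adj a b ∨ H.Adj a b)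
    (hI : ∀ v, v ∈ I ↔ v ∈ C.verts ∧ v ∈ H.verts)
    (h2l : ∀ v ∈ I, TwoLayered G v) (hnbrH : ∀ v ∈ I, ∃ w, H.Adj v w)
    (hA : SubIsMaxStable C A) {x : V} (hxC : x ∈ C.verts) (hxH : x ∉ H.verts)
    (hxA : x ∉ A) : ∃ y, y ∈ A ∧ y ∉ I ∧ C.Adj x y := by
  obtain ⟨y, hyA, hxy⟩ := maxSub_exists hA hxC hxA
  by_cases hyI : y ∈ I
  · obtain ⟨p, hxp, hpend⟩ := h2l y hyI x hxy.adj_sub.symm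
    obtain ⟨w₀, hw₀, huniq₀⟩ := hpend
    have huniq : ∀ z, G.Adj p z → z = x :=
      fun z hz => (huniq₀ z hz).trans (huniq₀ x hxp.symm).symm
    have hCxp : C.Adj x p := by
      rcases (hCH x p).1 hxp with h | h
      · exact h
      · exact absurd h.fst_mem hxH
    have hpI : p ∉ I := by
      intro hpI
      obtain ⟨w, hw⟩ := hnbrH p hpI
      have hwx := huniq w hw.adj_sub
      subst hwx
      exact hxH hw.symm.fst_mem
    exact ⟨p, pend_mem hA hCxp huniq hxA, hpI, hCxp⟩
  · exact ⟨y, hyA, hyI, hxy⟩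

lemma phi_max {G : SimpleGraph V} {C H : G.Subgraph} {X I : Set V}
    {S : Finset V}
    (hCH : ∀ a b, G.Adj a b ↔ C.Adj a b ∨ H.Adj a b)
    (hbi : ∀ a b, G.Adj a b → a ∈ X → b ∉ X) (hX : I ⊆ X)
    (hI : ∀ v, v ∈ I ↔ v ∈ C.verts ∧ v ∈ H.verts)
    (hS : IsMaxStable G S) : SubIsMaxStable C (phiMS G C I S) := by
  constructor
  · constructor
    · intro v hv
      rcases mem_phiMS.1 (by exact hv) with ⟨_, h⟩ | ⟨h, _⟩
      · exact h
      · exact ((hI v).1 h).1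
    · intro a ha b hb hab
      rcases mem_phiMS.1 ha with ⟨haS, _⟩ | ⟨haI, haP⟩ <;>
        rcases mem_phiMS.1 hb with ⟨hbS, _⟩ | ⟨hbI, hbP⟩
      · exact hS.1 a haS b hbS hab.adj_sub
      · exact hbP a hab.symm haS
      · exact haP b hab hbS
      · exact hbi a b hab.adj_sub (hX haI) (hX hbI)
  · intro T hT hsub
    refine Finset.Subset.antisymm hsub (fun x hxT => ?_)
    by_contra hxphi
    have hxC : x ∈ C.verts := hT.1 hxT
    have hxS : x ∉ S := fun hxS => hxphi (mem_phiMS.2 (Or.inl ⟨hxS, hxC⟩))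
    obtain ⟨y, hyS, hxy⟩ := maxG_exists hS hxS
    rcases (hCH x y).1 hxy with hc | hh
    · have hy : y ∈ phiMS G C I S := mem_phiMS.2 (Or.inl ⟨hyS, hc.snd_mem⟩)
      exact hT.2 x hxT y (hsub hy) hc
    · have hxI : x ∈ I := (hI x).2 ⟨hxC, hh.fst_mem⟩
      have hne : ¬(x ∈ I ∧ ∀ w, C.Adj x w → w ∉ S) :=
        fun h => hxphi (mem_phiMS.2 (Or.inr h))
      push_neg at hne
      obtain ⟨w, hcw, hwS⟩ := hne hxI
      have hw : w ∈ phiMS G C I S := mem_phiMS.2 (Or.inl ⟨hwS, hcw.snd_mem⟩)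
      exact hT.2 x hxT w (hsub hw) hcw

lemma mem_psi_left {G : SimpleGraph V} {C H : G.Subgraph} {A B : Finset V} {I : Set V}
    (hI : ∀ v, v ∈ I ↔ v ∈ C.verts ∧ v ∈ H.verts) (hB : ↑B ⊆ H.verts)
    {v : V} (hv : v ∈ psiMS I A B) (hvC : v ∈ C.verts) : v ∈ A := by
  rcases mem_psiMS.1 hv with ⟨h, _⟩ | ⟨hB', hnI⟩ | ⟨h, _, _⟩
  · exact h
  · exact absurd ((hI v).2 ⟨hvC, hB hB'⟩) hnI
  · exact h

lemma psi_max {G : SimpleGraph V} {C H : G.Subgraph} {A B : Finset V} {X I : Set V}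
    (hCH : ∀ a b, G.Adj a b ↔ C.Adj a b ∨ H.Adj a b)
    (hbi : ∀ a b, G.Adj a b → a ∈ X → b ∉ X) (hX : I ⊆ X)
    (hI : ∀ v, v ∈ I ↔ v ∈ C.verts ∧ v ∈ H.verts)
    (hVU : ∀ v, v ∈ C.verts ∨ v ∈ H.verts)
    (h2l : ∀ v ∈ I, TwoLayered G v)
    (hnbrC : ∀ v ∈ I, ∃ w, C.Adj v w) (hnbrH : ∀ v ∈ I, ∃ w, H.Adj v w)
    (hA : SubIsMaxStable C A) (hB : SubIsMaxStable H B) :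
    IsMaxStable G (psiMS I A B) := by
  have hI' : ∀ v, v ∈ I ↔ v ∈ H.verts ∧ v ∈ C.verts := fun v => (hI v).trans and_comm
  have hCH' : ∀ a b, G.Adj a b ↔ H.Adj a b ∨ C.Adj a b := fun a b => (hCH a b).trans or_comm
  constructor
  · intro a ha b hb hab
    rcases (hCH a b).1 hab with hc | hh
    · exact hA.1.2 a (mem_psi_left hI hB.1.1 ha hc.fst_mem)
        b (mem_psi_left hI hB.1.1 hb hc.snd_mem) hc
    · have ha' : a ∈ psiMS I B A := by rw [psiMS_comm]; exact ha
      have hb' : b ∈ psiMS I B A := by rw [psiMS_comm]; exact hb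
      exact hB.1.2 a (mem_psi_left hI' hA.1.1 ha' hh.fst_mem)
        b (mem_psi_left hI' hA.1.1 hb' hh.snd_mem) hh
  · intro T hT hsub
    refine Finset.Subset.antisymm hsub (fun x hxT => ?_)
    by_contra hxpsi
    have key : ∀ y, y ∈ psiMS I A B → ¬ G.Adj x y := fun y hy => hT x hxT y (hsub hy)
    by_cases hxI : x ∈ I
    · have hAB : ¬(x ∈ A ∧ x ∈ B) :=
        fun h => hxpsi (mem_psiMS.2 (Or.inr (Or.inr ⟨h.1, h.2, hxI⟩)))
      rcases not_and_or.1 hAB with hxA | hxB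
      · obtain ⟨y, hyA, hyI, hxy⟩ := case_I hbi hX hA hxI ((hI x).1 hxI).1 hxA
        exact key y (mem_psiMS.2 (Or.inl ⟨hyA, hyI⟩)) hxy.adj_sub
      · obtain ⟨y, hyB, hyI, hxy⟩ := case_I hbi hX hB hxI ((hI x).1 hxI).2 hxB
        exact key y (mem_psiMS.2 (Or.inr (Or.inl ⟨hyB, hyI⟩))) hxy.adj_sub
    · rcases hVU x with hxC | hxH
      · have hxH : x ∉ H.verts := fun h => hxI ((hI x).2 ⟨hxC, h⟩)
        have hxA : x ∉ A := fun h => hxpsi (mem_psiMS.2 (Or.inl ⟨h, hxI⟩))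
        obtain ⟨y, hyA, hyI, hxy⟩ := case_side hCH hI h2l hnbrH hA hxC hxH hxA
        exact key y (mem_psiMS.2 (Or.inl ⟨hyA, hyI⟩)) hxy.adj_sub
      · have hxC : x ∉ C.verts := fun h => hxI ((hI x).2 ⟨h, hxH⟩)
        have hxB : x ∉ B := fun h => hxpsi (mem_psiMS.2 (Or.inr (Or.inl ⟨h, hxI⟩)))
        obtain ⟨y, hyB, hyI, hxy⟩ := case_side hCH' hI' h2l hnbrC hB hxH hxC hxB
        exact key y (mem_psiMS.2 (Or.inr (Or.inl ⟨hyB, hyI⟩))) hxy.adj_sub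

lemma psi_phi {G : SimpleGraph V} {C H : G.Subgraph} {S : Finset V} {I : Set V}
    (hCH : ∀ a b, G.Adj a b ↔ C.Adj a b ∨ H.Adj a b)
    (hI : ∀ v, v ∈ I ↔ v ∈ C.verts ∧ v ∈ H.verts)
    (hVU : ∀ v, v ∈ C.verts ∨ v ∈ H.verts)
    (hS : IsMaxStable G S) : psiMS I (phiMS G C I S) (phiMS G H I S) = S := by
  ext x
  rw [mem_psiMS]
  constructor
  · rintro (⟨hxA, hxI⟩ | ⟨hxB, hxI⟩ | ⟨hxA, hxB, hxI⟩)
    · rcases mem_phiMS.1 hxA with ⟨h, _⟩ | ⟨h, _⟩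
      · exact h
      · exact absurd h hxI
    · rcases mem_phiMS.1 hxB with ⟨h, _⟩ | ⟨h, _⟩
      · exact h
      · exact absurd h hxI
    · by_contra hxS
      obtain ⟨y, hyS, hxy⟩ := maxG_exists hS hxS
      rcases (hCH x y).1 hxy with hc | hh
      · rcases mem_phiMS.1 hxA with ⟨h, _⟩ | ⟨_, hP⟩
        · exact hxS h
        · exact hP y hc hyS
      · rcases mem_phiMS.1 hxB with ⟨h, _⟩ | ⟨_, hP⟩
        · exact hxS h
        · exact hP y hh hyS
  · intro hxS
    by_cases hxI : x ∈ I
    · exact Or.inr (Or.inr ⟨mem_phiMS.2 (Or.inl ⟨hxS, ((hI x).1 hxI).1⟩),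
        mem_phiMS.2 (Or.inl ⟨hxS, ((hI x).1 hxI).2⟩), hxI⟩)
    · rcases hVU x with h | h
      · exact Or.inl ⟨mem_phiMS.2 (Or.inl ⟨hxS, h⟩), hxI⟩
      · exact Or.inr (Or.inl ⟨mem_phiMS.2 (Or.inl ⟨hxS, h⟩), hxI⟩)

lemma phi_psi {G : SimpleGraph V} {C H : G.Subgraph} {A B : Finset V} {X I : Set V}
    (hbi : ∀ a b, G.Adj a b → a ∈ X → b ∉ X) (hX : I ⊆ X)
    (hI : ∀ v, v ∈ I ↔ v ∈ C.verts ∧ v ∈ H.verts)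
    (hA : SubIsMaxStable C A) (hB : SubIsMaxStable H B) :
    phiMS G C I (psiMS I A B) = A := by
  ext x
  rw [mem_phiMS]
  constructor
  · rintro (⟨hxT, hxC⟩ | ⟨hxI, hP⟩)
    · exact mem_psi_left hI hB.1.1 hxT hxC
    · by_contra hxA
      obtain ⟨y, hyA, hyI, hxy⟩ := case_I hbi hX hA hxI ((hI x).1 hxI).1 hxA
      exact hP y hxy (mem_psiMS.2 (Or.inl ⟨hyA, hyI⟩))
  · intro hxA
    by_cases hxT : x ∈ psiMS I A B
    · exact Or.inl ⟨hxT, hA.1.1 hxA⟩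
    · refine Or.inr ⟨?_, ?_⟩
      · by_contra hxI
        exact hxT (mem_psiMS.2 (Or.inl ⟨hxA, hxI⟩))
      · intro w hcw hwT
        exact hA.1.2 x hxA w (mem_psi_left hI hB.1.1 hwT hcw.snd_mem) hcw

end Aux

theorem stmt_11 {V : Type*} [Fintype V] [DecidableEq V] (G : SimpleGraph V)
    (hconn : G.Connected) (X Y : Set V)
    (hdisj : Disjoint X Y) (hcov : X ∪ Y = Set.univ)
    (hbip : ∀ a b, G.Adj a b → (a ∈ X ∧ b ∈ Y) ∨ (a ∈ Y ∧ b ∈ X))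
    (C H : G.Subgraph)
    (hedge : Disjoint C.edgeSet H.edgeSet)
    (hunion : C ⊔ H = ⊤)
    (hclass : C.verts ∩ H.verts ⊆ X)
    (h2l : ∀ v ∈ C.verts ∩ H.verts, TwoLayered G v)
    (hnbr : ∀ v ∈ C.verts ∩ H.verts, (∃ w, C.Adj v w) ∧ (∃ w, H.Adj v w)) :
    numMaxStable G = subNumMaxStable C * subNumMaxStable H := by
  classical
  set I : Set V := C.verts ∩ H.verts with hIdef
  have hI : ∀ v, v ∈ I ↔ v ∈ C.verts ∧ v ∈ H.verts := fun v => Iff.rfl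
  have hI' : ∀ v, v ∈ I ↔ v ∈ H.verts ∧ v ∈ C.verts := fun v => (hI v).trans and_comm
  have hCH : ∀ a b, G.Adj a b ↔ C.Adj a b ∨ H.Adj a b := by
    intro a b
    rw [← SimpleGraph.Subgraph.top_adj, ← hunion, SimpleGraph.Subgraph.sup_adj]
  have hCH' : ∀ a b, G.Adj a b ↔ H.Adj a b ∨ C.Adj a b := fun a b => (hCH a b).trans or_comm
  have hVU : ∀ v, v ∈ C.verts ∨ v ∈ H.verts := by
    intro v
    have h1 : (C ⊔ H).verts = (⊤ : G.Subgraph).verts := by rw [hunion]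
    rw [SimpleGraph.Subgraph.verts_sup, SimpleGraph.Subgraph.verts_top] at h1
    have : v ∈ C.verts ∪ H.verts := h1 ▸ Set.mem_univ v
    exact this
  have hVU' : ∀ v, v ∈ H.verts ∨ v ∈ C.verts := fun v => (hVU v).symm
  have hbi : ∀ a b, G.Adj a b → a ∈ X → b ∉ X := by
    intro a b hab haX hbX
    rcases hbip a b hab with ⟨_, hbY⟩ | ⟨haY, _⟩
    · exact Set.disjoint_left.mp hdisj hbX hbY
    · exact Set.disjoint_left.mp hdisj haX haY
  have hXI : I ⊆ X := hclass
  have h2l' : ∀ v ∈ I, TwoLayered G v := h2l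
  have hnbrC : ∀ v ∈ I, ∃ w, C.Adj v w := fun v hv => (hnbr v hv).1
  have hnbrH : ∀ v ∈ I, ∃ w, H.Adj v w := fun v hv => (hnbr v hv).2
  let e : {S : Finset V // IsMaxStable G S} ≃
      {A : Finset V // SubIsMaxStable C A} × {B : Finset V // SubIsMaxStable H B} :=
    { toFun := fun S => (⟨phiMS G C I S.1, phi_max hCH hbi hXI hI S.2⟩,
        ⟨phiMS G H I S.1, phi_max hCH' hbi hXI hI' S.2⟩)
      invFun := fun p => ⟨psiMS I p.1.1 p.2.1,
        psi_max hCH hbi hXI hI hVU h2l' hnbrC hnbrH p.1.2 p.2.2⟩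
      left_inv := fun S => Subtype.ext (psi_phi hCH hI hVU S.2)
      right_inv := fun p => by
        have h1 : phiMS G C I (psiMS I (p.1 : Finset V) (p.2 : Finset V)) =
            (p.1 : Finset V) := phi_psi hbi hXI hI p.1.2 p.2.2
        have h2 : phiMS G H I (psiMS I (p.1 : Finset V) (p.2 : Finset V)) =
            (p.2 : Finset V) := by
          rw [psiMS_comm]; exact phi_psi hbi hXI hI' p.2.2 p.1.2
        exact Prod.ext_iff.mpr ⟨Subtype.ext h1, Subtype.ext h2⟩ }
  calc numMaxStable G = Nat.card {S : Finset V // IsMaxStable G S} :=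
        (Nat.card_coe_set_eq _).symm
    _ = Nat.card ({A : Finset V // SubIsMaxStable C A} ×
          {B : Finset V // SubIsMaxStable H B}) := Nat.card_congr e
    _ = Nat.card {A : Finset V // SubIsMaxStable C A} *
          Nat.card {B : Finset V // SubIsMaxStable H B} := Nat.card_prod _ _
    _ = subNumMaxStable C * subNumMaxStable H := by
          have hc : Nat.card {A : Finset V // SubIsMaxStable C A} = subNumMaxStable C :=
            Nat.card_coe_set_eq {S : Finset V | SubIsMaxStable C S}
          have hh : Nat.card {B : Finset V // SubIsMaxStable H B} = subNumMaxStable H :=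
            Nat.card_coe_set_eq {S : Finset V | SubIsMaxStable H S}
          rw [hc, hh]
end

section
/- Let G be a bipartite graph with a decomposition {C, H} into edge-disjoint subgraphs with union G, such that all vertices of V(C) ∩ V(H) lie in the same bipartite class of G and are all 2-layered in G. If r ∈ V(C) is rare in C (i.e., 2·w_C(r) ≤ w_C), then r is rare in G. -/
-- helper lemmas
lemma isMaxStable_block {V : Type*} [DecidableEq V] {G : SimpleGraph V} {S : Finset V}
    (h : IsMaxStable G S) {x : V} (hx : x ∉ S) : ∃ s ∈ S, G.Adj x s := by
  by_contra hno
  push_neg at hno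
  have hst : IsStable G (insert x S) := by
    intro a ha b hb hadj
    rcases Finset.mem_insert.mp ha with ha' | ha'
    · rcases Finset.mem_insert.mp hb with hb' | hb'
      · exact G.irrefl (ha' ▸ hb' ▸ hadj)
      · exact hno b hb' (ha' ▸ hadj)
    · rcases Finset.mem_insert.mp hb with hb' | hb'
      · exact hno a ha' (hb' ▸ hadj).symm
      · exact h.1 a ha' b hb' hadj
  have := h.2 _ hst (Finset.subset_insert x S)
  exact hx (this ▸ Finset.mem_insert_self x S)

lemma subIsMaxStable_block {V : Type*} [DecidableEq V] {G : SimpleGraph V} {C : G.Subgraph}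
    {S : Finset V} (h : SubIsMaxStable C S) {x : V} (hxv : x ∈ C.verts) (hx : x ∉ S) :
    ∃ s ∈ S, C.Adj x s := by
  by_contra hno
  push_neg at hno
  have hst : SubIsStable C (insert x S) := by
    refine ⟨?_, ?_⟩
    · rw [Finset.coe_insert]
      exact Set.insert_subset hxv h.1.1
    · intro a ha b hb hadj
      rcases Finset.mem_insert.mp ha with ha' | ha'
      · rcases Finset.mem_insert.mp hb with hb' | hb'
        · exact G.irrefl (ha' ▸ hb' ▸ hadj).adj_sub
        · exact hno b hb' (ha' ▸ hadj)
      · rcases Finset.mem_insert.mp hb with hb' | hb'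
        · exact hno a ha' (hb' ▸ hadj).symm
        · exact h.1.2 a ha' b hb' hadj
  have := h.2 _ hst (Finset.subset_insert x S)
  exact hx (this ▸ Finset.mem_insert_self x S)

lemma subIsMaxStable_isolated {V : Type*} [DecidableEq V] {G : SimpleGraph V} {C : G.Subgraph}
    {S : Finset V} (h : SubIsMaxStable C S) {p : V} (hp : p ∈ C.verts)
    (hiso : ∀ z, ¬ C.Adj p z) : p ∈ S := by
  by_contra hpS
  obtain ⟨s, _, hs⟩ := subIsMaxStable_block h hp hpS
  exact hiso s hs

lemma isMaxStable_of_block {V : Type*} {G : SimpleGraph V} {S : Finset V}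
    (hst : IsStable G S) (hb : ∀ x ∉ S, ∃ s ∈ S, G.Adj x s) : IsMaxStable G S := by
  refine ⟨hst, fun T hT hsub => Finset.Subset.antisymm hsub fun x hxT => ?_⟩
  by_contra hx
  obtain ⟨s, hs, hadj⟩ := hb x hx
  exact hT x hxT s (hsub hs) hadj

lemma subIsMaxStable_of_block {V : Type*} {G : SimpleGraph V} {C : G.Subgraph} {S : Finset V}
    (hst : SubIsStable C S) (hb : ∀ x ∈ C.verts, x ∉ S → ∃ s ∈ S, C.Adj x s) :
    SubIsMaxStable C S := by
  refine ⟨hst, fun T hT hsub => Finset.Subset.antisymm hsub fun x hxT => ?_⟩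
  by_contra hx
  obtain ⟨s, hs, hadj⟩ := hb x (hT.1 hxT) hx
  exact hT.2 x hxT s (hsub hs) hadj

open scoped Classical in
noncomputable def phiF {V : Type*} [Fintype V] [DecidableEq V] {G : SimpleGraph V}
    (C H : G.Subgraph) (S : Finset V) : Finset V :=
  S.filter (fun x => x ∈ C.verts) ∪
    Finset.univ.filter (fun w => w ∈ C.verts ∧ w ∈ H.verts ∧ ∀ s ∈ S, ¬ C.Adj w s)

open scoped Classical in
noncomputable def thetaF {V : Type*} [DecidableEq V] {G : SimpleGraph V}
    (C H : G.Subgraph) (A S : Finset V) : Finset V :=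
  A.filter (fun a => a ∉ H.verts) ∪ S.filter (fun b => b ∉ C.verts ∨ b ∈ A)

open scoped Classical in
noncomputable def psiF {V : Type*} [Fintype V] [DecidableEq V] {G : SimpleGraph V}
    (C H : G.Subgraph) (A S : Finset V) : Finset V :=
  S.filter (fun x => x ∈ H.verts) ∪
    Finset.univ.filter
      (fun v => (v ∈ C.verts ∧ v ∈ H.verts) ∧ v ∉ A ∧ ∀ s ∈ S, s ∈ H.verts → ¬ H.Adj v s)

lemma mem_phiF {V : Type*} [Fintype V] [DecidableEq V] {G : SimpleGraph V}
    {C H : G.Subgraph} {S : Finset V} {x : V} :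
    x ∈ phiF C H S ↔ (x ∈ S ∧ x ∈ C.verts) ∨
      (x ∈ C.verts ∧ x ∈ H.verts ∧ ∀ s ∈ S, ¬ C.Adj x s) := by
  simp [phiF]

lemma mem_thetaF {V : Type*} [DecidableEq V] {G : SimpleGraph V}
    {C H : G.Subgraph} {A S : Finset V} {x : V} :
    x ∈ thetaF C H A S ↔ (x ∈ A ∧ x ∉ H.verts) ∨ (x ∈ S ∧ (x ∉ C.verts ∨ x ∈ A)) := by
  simp [thetaF]

lemma mem_psiF {V : Type*} [Fintype V] [DecidableEq V] {G : SimpleGraph V}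
    {C H : G.Subgraph} {A S : Finset V} {x : V} :
    x ∈ psiF C H A S ↔ (x ∈ S ∧ x ∈ H.verts) ∨
      ((x ∈ C.verts ∧ x ∈ H.verts) ∧ x ∉ A ∧ ∀ s ∈ S, s ∈ H.verts → ¬ H.Adj x s) := by
  simp [psiF]

theorem stmt_12 {V : Type*} [Fintype V] [DecidableEq V] (G : SimpleGraph V)
    (X Y : Set V)
    (hdisj : Disjoint X Y) (hcov : X ∪ Y = Set.univ)
    (hbip : ∀ a b, G.Adj a b → (a ∈ X ∧ b ∈ Y) ∨ (a ∈ Y ∧ b ∈ X))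
    (C H : G.Subgraph)
    (hedge : Disjoint C.edgeSet H.edgeSet)
    (hunion : C ⊔ H = ⊤)
    (hclass : C.verts ∩ H.verts ⊆ X)
    (h2l : ∀ v ∈ C.verts ∩ H.verts, TwoLayered G v)
    (r : V) (hr : r ∈ C.verts)
    (hrare : 2 * subNumMaxStableCont C r ≤ subNumMaxStable C) :
    2 * numMaxStableCont G r ≤ numMaxStable G := by
  classical
  -- Basic structural facts
  have hGadj : ∀ a b : V, G.Adj a b ↔ C.Adj a b ∨ H.Adj a b := by
    intro a b
    constructor
    · intro hg
      have : (C ⊔ H).Adj a b := by rw [hunion]; exact SimpleGraph.Subgraph.top_adj.mpr hg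
      exact SimpleGraph.Subgraph.sup_adj.mp this
    · rintro (hc | hc) <;> exact hc.adj_sub
  have hV : ∀ x : V, x ∈ C.verts ∨ x ∈ H.verts := by
    intro x
    have : x ∈ (C ⊔ H).verts := by rw [hunion]; trivial
    exact this
  have hNbrW : ∀ x, x ∈ C.verts → x ∈ H.verts → ∀ y, G.Adj x y →
      y ∈ C.verts → y ∈ H.verts → False := by
    intro x hxC hxH y hadj hyC hyH
    have hx : x ∈ X := hclass ⟨hxC, hxH⟩
    have hy : y ∈ X := hclass ⟨hyC, hyH⟩
    rcases hbip x y hadj with ⟨_, h2⟩ | ⟨h1, _⟩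
    · exact (Set.disjoint_left.mp hdisj hy) h2
    · exact (Set.disjoint_left.mp hdisj hx) h1
  have hpend : ∀ v, v ∈ C.verts → v ∈ H.verts → ∀ x, G.Adj v x →
      ∃ p, G.Adj x p ∧ ∀ z, G.Adj p z → z = x := by
    intro v h1 h2 x hadj
    obtain ⟨p, hxp, w₀, _, huniq⟩ := h2l v ⟨h1, h2⟩ x hadj
    refine ⟨p, hxp, fun z hz => ?_⟩
    exact (huniq z hz).trans (huniq x hxp.symm).symm
  -- φ is a maximal stable set of C
  have hphiMax : ∀ S : Finset V, IsMaxStable G S → SubIsMaxStable C (phiF C H S) := by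
    intro S hS
    have hsub : ↑(phiF C H S) ⊆ C.verts := by
      intro x hx
      rcases mem_phiF.mp hx with ⟨_, h⟩ | ⟨h, _, _⟩ <;> exact h
    have hstab : ∀ a ∈ phiF C H S, ∀ b ∈ phiF C H S, ¬ C.Adj a b := by
      intro a ha b hb hadj
      rcases mem_phiF.mp ha with ⟨haS, haC⟩ | ⟨haC, haH, hano⟩ <;>
        rcases mem_phiF.mp hb with ⟨hbS, hbC⟩ | ⟨hbC, hbH, hbno⟩
      · exact hS.1 a haS b hbS hadj.adj_sub
      · exact hbno a haS hadj.symm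
      · exact hano b hbS hadj
      · exact hNbrW a haC haH b hadj.adj_sub hbC hbH
    refine ⟨⟨hsub, hstab⟩, fun T hT hsubT => Finset.Subset.antisymm hsubT fun x hxT => ?_⟩
    by_contra hx
    have hxC : x ∈ C.verts := hT.1 hxT
    by_cases hblock : ∃ s ∈ S, C.Adj x s
    · obtain ⟨s, hsS, hcs⟩ := hblock
      have hsφ : s ∈ phiF C H S := mem_phiF.mpr (Or.inl ⟨hsS, hcs.snd_mem⟩)
      exact hT.2 x hxT s (hsubT hsφ) hcs
    · have hxS : x ∉ S := fun h => hx (mem_phiF.mpr (Or.inl ⟨h, hxC⟩))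
      obtain ⟨s, hsS, hgadj⟩ := isMaxStable_block hS hxS
      rcases (hGadj x s).mp hgadj with hc | hh
      · exact hblock ⟨s, hsS, hc⟩
      · exact hx (mem_phiF.mpr (Or.inr ⟨hxC, hh.fst_mem,
          fun s' hs' hc' => hblock ⟨s', hs', hc'⟩⟩))
  -- θ is a maximal stable set of G
  have hthetaMax : ∀ A S : Finset V, SubIsMaxStable C A → SubIsMaxStable H S →
      IsMaxStable G (thetaF C H A S) := by
    intro A S hA hS
    have hstab : IsStable G (thetaF C H A S) := by
      intro a ha b hb hadj
      rcases mem_thetaF.mp ha with ⟨haA, hanH⟩ | ⟨haS, hapred⟩ <;>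
        rcases mem_thetaF.mp hb with ⟨hbA, hbnH⟩ | ⟨hbS, hbpred⟩
      · rcases (hGadj a b).mp hadj with hc | hh
        · exact hA.1.2 a haA b hbA hc
        · exact hbnH hh.snd_mem
      · rcases (hGadj a b).mp hadj with hc | hh
        · have hbC : b ∈ C.verts := hc.snd_mem
          have hbA : b ∈ A := hbpred.resolve_left (fun h => h hbC)
          exact hA.1.2 a haA b hbA hc
        · exact hanH hh.fst_mem
      · rcases (hGadj a b).mp hadj with hc | hh
        · have haC : a ∈ C.verts := hc.fst_mem
          have haA : a ∈ A := hapred.resolve_left (fun h => h haC)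
          exact hA.1.2 a haA b hbA hc
        · exact hbnH hh.snd_mem
      · rcases (hGadj a b).mp hadj with hc | hh
        · exact hNbrW a hc.fst_mem (hS.1.1 haS) b hadj hc.snd_mem (hS.1.1 hbS)
        · exact hS.1.2 a haS b hbS hh
    refine isMaxStable_of_block hstab ?_
    intro x hx
    by_cases hxC : x ∈ C.verts
    · by_cases hxH : x ∈ H.verts
      · -- x ∈ W
        by_cases hxA : x ∈ A
        · have hxS : x ∉ S := fun h => hx (mem_thetaF.mpr (Or.inr ⟨h, Or.inr hxA⟩))
          obtain ⟨s, hsS, hh⟩ := subIsMaxStable_block hS hxH hxS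
          have hsnC : s ∉ C.verts := fun h => hNbrW x hxC hxH s hh.adj_sub h hh.snd_mem
          exact ⟨s, mem_thetaF.mpr (Or.inr ⟨hsS, Or.inl hsnC⟩), hh.adj_sub⟩
        · obtain ⟨a, haA, hc⟩ := subIsMaxStable_block hA hxC hxA
          have hanH : a ∉ H.verts := fun h => hNbrW x hxC hxH a hc.adj_sub hc.snd_mem h
          exact ⟨a, mem_thetaF.mpr (Or.inl ⟨haA, hanH⟩), hc.adj_sub⟩
      · -- x ∈ C.verts \ H.verts
        have hxA : x ∉ A := fun h => hx (mem_thetaF.mpr (Or.inl ⟨h, hxH⟩))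
        obtain ⟨a, haA, hc⟩ := subIsMaxStable_block hA hxC hxA
        by_cases haH : a ∈ H.verts
        · by_cases haS : a ∈ S
          · exact ⟨a, mem_thetaF.mpr (Or.inr ⟨haS, Or.inr haA⟩), hc.adj_sub⟩
          · -- pendant route on the C side
            have haC : a ∈ C.verts := hA.1.1 haA
            obtain ⟨p, hxp, hpuniq⟩ := hpend a haC haH x hc.adj_sub.symm
            have hpC : C.Adj x p := by
              rcases (hGadj x p).mp hxp with h | h
              · exact h
              · exact absurd h.fst_mem hxH
            have hpA : p ∈ A := by
              by_contra hpA
              obtain ⟨a', ha', hc'⟩ := subIsMaxStable_block hA hpC.snd_mem hpA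
              exact hxA ((hpuniq a' hc'.adj_sub) ▸ ha')
            by_cases hpH : p ∈ H.verts
            · have hpiso : ∀ z, ¬ H.Adj p z := fun z hz =>
                hxH ((hpuniq z hz.adj_sub) ▸ hz.snd_mem)
              have hpS : p ∈ S := subIsMaxStable_isolated hS hpH hpiso
              exact ⟨p, mem_thetaF.mpr (Or.inr ⟨hpS, Or.inr hpA⟩), hxp⟩
            · exact ⟨p, mem_thetaF.mpr (Or.inl ⟨hpA, hpH⟩), hxp⟩
        · exact ⟨a, mem_thetaF.mpr (Or.inl ⟨haA, haH⟩), hc.adj_sub⟩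
    · -- x ∉ C.verts
      have hxH : x ∈ H.verts := (hV x).resolve_left hxC
      have hxS : x ∉ S := fun h => hx (mem_thetaF.mpr (Or.inr ⟨h, Or.inl hxC⟩))
      obtain ⟨s, hsS, hh⟩ := subIsMaxStable_block hS hxH hxS
      by_cases hsIn : s ∉ C.verts ∨ s ∈ A
      · exact ⟨s, mem_thetaF.mpr (Or.inr ⟨hsS, hsIn⟩), hh.adj_sub⟩
      · push_neg at hsIn
        obtain ⟨hsC, hsA⟩ := hsIn
        -- pendant route on the H side
        obtain ⟨p, hxp, hpuniq⟩ := hpend s hsC hh.snd_mem x hh.adj_sub.symm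
        have hpH : H.Adj x p := by
          rcases (hGadj x p).mp hxp with h | h
          · exact absurd h.fst_mem hxC
          · exact h
        have hpS : p ∈ S := by
          by_contra hpS
          obtain ⟨z, hzS, hz⟩ := subIsMaxStable_block hS hpH.snd_mem hpS
          exact hxS ((hpuniq z hz.adj_sub) ▸ hzS)
        by_cases hpC : p ∈ C.verts
        · have hpiso : ∀ z, ¬ C.Adj p z := fun z hz =>
            hxC ((hpuniq z hz.adj_sub) ▸ hz.snd_mem)
          have hpA : p ∈ A := subIsMaxStable_isolated hA hpC hpiso
          exact ⟨p, mem_thetaF.mpr (Or.inr ⟨hpS, Or.inr hpA⟩), hxp⟩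
        · exact ⟨p, mem_thetaF.mpr (Or.inr ⟨hpS, Or.inl hpC⟩), hxp⟩
  -- ψ of a maximal stable set of G (w.r.t. its own φ) is a maximal stable set of H
  have hpsiMax : ∀ D : Finset V, IsMaxStable G D →
      SubIsMaxStable H (psiF C H (phiF C H D) D) := by
    intro D hD
    have hsub : ↑(psiF C H (phiF C H D) D) ⊆ H.verts := by
      intro x hx
      rcases mem_psiF.mp hx with ⟨_, h⟩ | ⟨⟨_, h⟩, _, _⟩ <;> exact h
    have hstab : ∀ a ∈ psiF C H (phiF C H D) D, ∀ b ∈ psiF C H (phiF C H D) D,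
        ¬ H.Adj a b := by
      intro a ha b hb hadj
      rcases mem_psiF.mp ha with ⟨haD, haH⟩ | ⟨⟨haC, haH⟩, hanA, hano⟩ <;>
        rcases mem_psiF.mp hb with ⟨hbD, hbH⟩ | ⟨⟨hbC, hbH⟩, hbnA, hbno⟩
      · exact hD.1 a haD b hbD hadj.adj_sub
      · exact hbno a haD haH hadj.symm
      · exact hano b hbD hbH hadj
      · exact hNbrW a haC haH b hadj.adj_sub hbC hbH
    refine subIsMaxStable_of_block ⟨hsub, hstab⟩ ?_
    intro x hxH hx
    have hxD : x ∉ D := fun h => hx (mem_psiF.mpr (Or.inl ⟨h, hxH⟩))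
    by_cases hxC : x ∈ C.verts
    · by_cases hxA : x ∈ phiF C H D
      · -- x ∈ φ(D) but x ∉ D : x has no C-neighbor in D, so its G-blocker is an H-edge
        have hnoC : ∀ s ∈ D, ¬ C.Adj x s := by
          rcases mem_phiF.mp hxA with ⟨hxD', _⟩ | ⟨_, _, h⟩
          · exact absurd hxD' hxD
          · exact h
        obtain ⟨s, hsD, hgadj⟩ := isMaxStable_block hD hxD
        rcases (hGadj x s).mp hgadj with hc | hh
        · exact absurd hc (hnoC s hsD)
        · exact ⟨s, mem_psiF.mpr (Or.inl ⟨hsD, hh.snd_mem⟩), hh⟩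
      · -- x ∈ W \ φ(D), and x ∉ ψ, so the "no H-neighbor" condition must fail
        have : ¬ ∀ s ∈ D, s ∈ H.verts → ¬ H.Adj x s := fun hall =>
          hx (mem_psiF.mpr (Or.inr ⟨⟨hxC, hxH⟩, hxA, hall⟩))
        push_neg at this
        obtain ⟨s, hsD, hsH, hadj⟩ := this
        exact ⟨s, mem_psiF.mpr (Or.inl ⟨hsD, hsH⟩), hadj⟩
    · obtain ⟨s, hsD, hgadj⟩ := isMaxStable_block hD hxD
      rcases (hGadj x s).mp hgadj with hc | hh
      · exact absurd hc.fst_mem hxC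
      · exact ⟨s, mem_psiF.mpr (Or.inl ⟨hsD, hh.snd_mem⟩), hh⟩
  -- reconstruction: θ (φ D) (ψ D) = D
  have hrec : ∀ D : Finset V, IsMaxStable G D →
      thetaF C H (phiF C H D) (psiF C H (phiF C H D) D) = D := by
    intro D hD
    ext x
    constructor
    · intro hx
      rcases mem_thetaF.mp hx with ⟨hxA, hxnH⟩ | ⟨hxψ, hpred⟩
      · rcases mem_phiF.mp hxA with ⟨hxD, _⟩ | ⟨_, hxH, _⟩
        · exact hxD
        · exact absurd hxH hxnH
      · rcases mem_psiF.mp hxψ with ⟨hxD, _⟩ | ⟨⟨hxC, _⟩, hxnA, _⟩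
        · exact hxD
        · rcases hpred with h | h
          · exact absurd hxC h
          · exact absurd h hxnA
    · intro hxD
      by_cases hxH : x ∈ H.verts
      · have hψ : x ∈ psiF C H (phiF C H D) D := mem_psiF.mpr (Or.inl ⟨hxD, hxH⟩)
        by_cases hxC : x ∈ C.verts
        · exact mem_thetaF.mpr (Or.inr ⟨hψ, Or.inr (mem_phiF.mpr (Or.inl ⟨hxD, hxC⟩))⟩)
        · exact mem_thetaF.mpr (Or.inr ⟨hψ, Or.inl hxC⟩)
      · have hxC : x ∈ C.verts := (hV x).resolve_right hxH
        exact mem_thetaF.mpr (Or.inl ⟨mem_phiF.mpr (Or.inl ⟨hxD, hxC⟩), hxH⟩)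
  -- φ (θ A S) = A
  have hphitheta : ∀ A S : Finset V, SubIsMaxStable C A → SubIsMaxStable H S →
      phiF C H (thetaF C H A S) = A := by
    intro A S hA hS
    ext x
    constructor
    · intro hx
      rcases mem_phiF.mp hx with ⟨hxD, hxC⟩ | ⟨hxC, hxH, hnob⟩
      · rcases mem_thetaF.mp hxD with ⟨hxA, _⟩ | ⟨hxS, hpred⟩
        · exact hxA
        · exact hpred.resolve_left (fun h => h hxC)
      · by_contra hxA
        obtain ⟨a, haA, hc⟩ := subIsMaxStable_block hA hxC hxA
        have hanH : a ∉ H.verts := fun h => hNbrW x hxC hxH a hc.adj_sub hc.snd_mem h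
        exact hnob a (mem_thetaF.mpr (Or.inl ⟨haA, hanH⟩)) hc
    · intro hxA
      have hxC : x ∈ C.verts := hA.1.1 hxA
      by_cases hxH : x ∈ H.verts
      · by_cases hxS : x ∈ S
        · exact mem_phiF.mpr (Or.inl ⟨mem_thetaF.mpr (Or.inr ⟨hxS, Or.inr hxA⟩), hxC⟩)
        · refine mem_phiF.mpr (Or.inr ⟨hxC, hxH, ?_⟩)
          intro d hd hcd
          rcases mem_thetaF.mp hd with ⟨hdA, _⟩ | ⟨hdS, _⟩
          · exact hA.1.2 x hxA d hdA hcd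
          · exact hNbrW x hxC hxH d hcd.adj_sub hcd.snd_mem (hS.1.1 hdS)
      · exact mem_phiF.mpr (Or.inl ⟨mem_thetaF.mpr (Or.inl ⟨hxA, hxH⟩), hxC⟩)
  -- ψ w.r.t. A of (θ A S) = S
  have hpsitheta : ∀ A S : Finset V, SubIsMaxStable C A → SubIsMaxStable H S →
      psiF C H A (thetaF C H A S) = S := by
    intro A S hA hS
    ext x
    constructor
    · intro hx
      rcases mem_psiF.mp hx with ⟨hxD, hxH⟩ | ⟨⟨hxC, hxH⟩, hxnA, hall⟩
      · rcases mem_thetaF.mp hxD with ⟨_, hxnH⟩ | ⟨hxS, _⟩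
        · exact absurd hxH hxnH
        · exact hxS
      · by_contra hxS
        obtain ⟨s, hsS, hh⟩ := subIsMaxStable_block hS hxH hxS
        have hsnC : s ∉ C.verts := fun h => hNbrW x hxC hxH s hh.adj_sub h hh.snd_mem
        exact hall s (mem_thetaF.mpr (Or.inr ⟨hsS, Or.inl hsnC⟩)) hh.snd_mem hh
    · intro hxS
      have hxH : x ∈ H.verts := hS.1.1 hxS
      by_cases hpred : x ∉ C.verts ∨ x ∈ A
      · exact mem_psiF.mpr (Or.inl ⟨mem_thetaF.mpr (Or.inr ⟨hxS, hpred⟩), hxH⟩)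
      · push_neg at hpred
        obtain ⟨hxC, hxnA⟩ := hpred
        refine mem_psiF.mpr (Or.inr ⟨⟨hxC, hxH⟩, hxnA, ?_⟩)
        intro d hd hdH hadj
        rcases mem_thetaF.mp hd with ⟨_, hdnH⟩ | ⟨hdS, _⟩
        · exact hdnH hdH
        · exact hS.1.2 x hxS d hdS hadj
  -- Counting
  set k := Set.ncard {S : Finset V | SubIsMaxStable H S} with hk
  have hGcard : numMaxStable G = subNumMaxStable C * k := by
    have e : {D : Finset V // IsMaxStable G D} ≃
        {A : Finset V // SubIsMaxStable C A} × {S : Finset V // SubIsMaxStable H S} :=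
      { toFun := fun D => (⟨phiF C H D.1, hphiMax D.1 D.2⟩,
          ⟨psiF C H (phiF C H D.1) D.1, hpsiMax D.1 D.2⟩)
        invFun := fun p => ⟨thetaF C H p.1.1 p.2.1, hthetaMax _ _ p.1.2 p.2.2⟩
        left_inv := fun D => Subtype.ext (hrec D.1 D.2)
        right_inv := fun p => by
          obtain ⟨⟨A, hA⟩, ⟨S, hS⟩⟩ := p
          have h1 := hphitheta A S hA hS
          have h2 : psiF C H (phiF C H (thetaF C H A S)) (thetaF C H A S) = S := by
            rw [h1]; exact hpsitheta A S hA hS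
          exact Prod.ext (Subtype.ext h1) (Subtype.ext h2) }
    have := Nat.card_congr e
    rw [Nat.card_prod] at this
    unfold numMaxStable subNumMaxStable
    rw [← Nat.card_coe_set_eq, ← Nat.card_coe_set_eq, hk, ← Nat.card_coe_set_eq]
    exact this
  have hGcardr : numMaxStableCont G r ≤ subNumMaxStableCont C r * k := by
    let f : {D : Finset V // IsMaxStable G D ∧ r ∈ D} →
        {A : Finset V // SubIsMaxStable C A ∧ r ∈ A} × {S : Finset V // SubIsMaxStable H S} :=
      fun D => (⟨phiF C H D.1, hphiMax D.1 D.2.1, mem_phiF.mpr (Or.inl ⟨D.2.2, hr⟩)⟩,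
        ⟨psiF C H (phiF C H D.1) D.1, hpsiMax D.1 D.2.1⟩)
    have hinj : Function.Injective f := by
      intro D D' h
      have h1 : phiF C H D.1 = phiF C H D'.1 := congrArg (fun p => p.1.1) h
      have h2 : psiF C H (phiF C H D.1) D.1 = psiF C H (phiF C H D'.1) D'.1 :=
        congrArg (fun p => p.2.1) h
      apply Subtype.ext
      calc D.1 = thetaF C H (phiF C H D.1) (psiF C H (phiF C H D.1) D.1) :=
            (hrec D.1 D.2.1).symm
        _ = thetaF C H (phiF C H D'.1) (psiF C H (phiF C H D'.1) D'.1) := congrArg₂ (thetaF C H) h1 h2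
        _ = D'.1 := hrec D'.1 D'.2.1
    have := Nat.card_le_card_of_injective f hinj
    rw [Nat.card_prod] at this
    unfold numMaxStableCont subNumMaxStableCont
    rw [← Nat.card_coe_set_eq, hk, ← Nat.card_coe_set_eq, ← Nat.card_coe_set_eq]
    exact this
  calc 2 * numMaxStableCont G r ≤ 2 * (subNumMaxStableCont C r * k) :=
        Nat.mul_le_mul_left 2 hGcardr
    _ = (2 * subNumMaxStableCont C r) * k := by ring
    _ ≤ subNumMaxStable C * k := Nat.mul_le_mul_right k hrare
    _ = numMaxStable G := hGcard.symm
end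

section
/- Let G be a bipartite graph with a decomposition {C, H} as in Theorem: all vertices of V(C)∩V(H) = [n] in one bipartite class and 2-layered. Then for every vertex b ∈ V(C) \ [n], w_G(b) = w_C(b) · w_H, and for every a ∈ [n], w_G(a) ≤ w_C(a) · w_H(a). -/
/-!
A maximal stable set `S` of `G` is cut into a maximal stable set of `C` and one of `H`: keep
`S ∩ V(C)` and add the common vertices without `C`-neighbour in `S` (symmetrically for `H`).
Conversely, two maximal stable sets `S₁` of `C` and `S₂` of `H` are glued by keeping the vertices
of `S₁` without `H`-neighbour in `S₂` and those of `S₂` without `C`-neighbour in `S₁`. Since the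
common vertices are pairwise non-adjacent, the gluing is stable and recovers `S` from its two
pieces, so cutting is injective, which gives the inequality. The glued set is dominating, hence
maximal: a vertex `v ∈ V(C) \ V(H)` outside `S₁` has a neighbour `w ∈ S₁`; if `w` is a common
vertex, 2-layeredness gives a pendant neighbour `p` of `v`, which lies in `S₁` and survives the
gluing. So for `b ∈ V(C) \ V(H)` cutting and gluing are mutually inverse bijections.
-/

section Decomposition

open Finset Function

variable {V : Type*} {G : SimpleGraph V}

lemma subIsMaxStable_iff {C : G.Subgraph} {S : Finset V} :
    SubIsMaxStable C S ↔ SubIsStable C S ∧ ∀ v ∈ C.verts, v ∉ S → ∃ w ∈ S, C.Adj v w := by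
  classical
  refine ⟨fun hS => ⟨hS.1, fun v hv hvS => ?_⟩, fun ⟨hst, hdom⟩ => ⟨hst, fun T hT hST => ?_⟩⟩
  · by_contra! hno
    have hins : SubIsStable C (insert v S) := by
      refine ⟨by simpa [Set.insert_subset_iff] using ⟨hv, hS.1.1⟩, ?_⟩
      simp only [mem_insert]
      rintro a (rfl | ha) b (rfl | hb) hab
      · exact hab.ne rfl
      · exact hno b hb hab
      · exact hno a ha hab.symm
      · exact hS.1.2 a ha b hb hab
    exact hvS (hS.2 _ hins (subset_insert v S) ▸ mem_insert_self v S)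
  · by_contra hne
    obtain ⟨t, htT, htS⟩ := exists_of_ssubset (hST.ssubset_of_ne hne)
    obtain ⟨w, hwS, htw⟩ := hdom t (hT.1 htT) htS
    exact hT.2 t htT w (hST hwS) htw

lemma isMaxStable_iff_subIsMaxStable_top {S : Finset V} :
    IsMaxStable G S ↔ SubIsMaxStable (⊤ : G.Subgraph) S := by
  simp [IsMaxStable, SubIsMaxStable, IsStable, SubIsStable]

lemma isMaxStable_iff {S : Finset V} :
    IsMaxStable G S ↔ IsStable G S ∧ ∀ v ∉ S, ∃ w ∈ S, G.Adj v w := by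
  rw [isMaxStable_iff_subIsMaxStable_top, subIsMaxStable_iff]
  simp [SubIsStable, IsStable]

lemma not_adj_of_mem_of_mem {X Y : Set V} (hdisj : Disjoint X Y)
    (hbip : ∀ a b, G.Adj a b → (a ∈ X ∧ b ∈ Y) ∨ (a ∈ Y ∧ b ∈ X)) {a b : V} (ha : a ∈ X)
    (hb : b ∈ X) : ¬ G.Adj a b := fun hab => by
  rcases hbip a b hab with ⟨-, hbY⟩ | ⟨haY, -⟩
  · exact Set.disjoint_left.mp hdisj hb hbY
  · exact Set.disjoint_left.mp hdisj ha haY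

structure IsLayeredDecomp (C H : G.Subgraph) : Prop where
  edgeSet_disjoint : Disjoint C.edgeSet H.edgeSet
  sup_eq_top : C ⊔ H = ⊤
  not_adj_common : ∀ a ∈ C.verts ∩ H.verts, ∀ b ∈ C.verts ∩ H.verts, ¬ G.Adj a b
  twoLayered : ∀ v ∈ C.verts ∩ H.verts, TwoLayered G v
  exists_adj_common : ∀ v ∈ C.verts ∩ H.verts, (∃ w, C.Adj v w) ∧ (∃ w, H.Adj v w)

open Classical in
noncomputable def stableTrace [Fintype V] (C H : G.Subgraph) (S : Finset V) : Finset V :=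
  univ.filter fun a => a ∈ C.verts ∧ (a ∈ S ∨ (a ∈ H.verts ∧ ∀ w ∈ S, ¬ C.Adj a w))

open Classical in
noncomputable def stableGlue (C H : G.Subgraph) (S₁ S₂ : Finset V) : Finset V :=
  S₁.filter (fun a => ∀ y ∈ S₂, ¬ H.Adj a y) ∪ S₂.filter (fun a => ∀ y ∈ S₁, ¬ C.Adj a y)

variable {C H : G.Subgraph} {S S₁ S₂ : Finset V} {a v w : V}

@[simp]
lemma mem_stableTrace [Fintype V] :
    a ∈ stableTrace C H S ↔ a ∈ C.verts ∧ (a ∈ S ∨ (a ∈ H.verts ∧ ∀ w ∈ S, ¬ C.Adj a w)) := by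
  simp [stableTrace]

@[simp]
lemma mem_stableGlue :
    a ∈ stableGlue C H S₁ S₂ ↔
      (a ∈ S₁ ∧ ∀ y ∈ S₂, ¬ H.Adj a y) ∨ (a ∈ S₂ ∧ ∀ y ∈ S₁, ¬ C.Adj a y) := by
  simp [stableGlue]

lemma stableGlue_comm : stableGlue C H S₁ S₂ = stableGlue H C S₂ S₁ := by
  classical exact union_comm _ _

lemma mem_stableGlue_of_mem_left (h₂ : SubIsStable H S₂) (ha : a ∈ S₁)
    (haH : a ∈ H.verts → a ∈ S₂) : a ∈ stableGlue C H S₁ S₂ :=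
  mem_stableGlue.2 <| Or.inl ⟨ha, fun y hy hay => h₂.2 a (haH hay.fst_mem) y hy hay⟩

lemma not_adj_of_mem_stableTrace [Fintype V] (hS : IsStable G S) (hv : v ∈ S)
    (ha : a ∈ stableTrace C H S) : ¬ C.Adj v a := by
  intro hva
  obtain ⟨-, haS | ⟨-, hno⟩⟩ := mem_stableTrace.1 ha
  · exact hS v hv a haS hva.adj_sub
  · exact hno v hv hva.symm

namespace IsLayeredDecomp

variable (hd : IsLayeredDecomp C H)
include hd

protected lemma symm : IsLayeredDecomp H C where
  edgeSet_disjoint := hd.edgeSet_disjoint.symm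
  sup_eq_top := sup_comm C H ▸ hd.sup_eq_top
  not_adj_common := Set.inter_comm C.verts H.verts ▸ hd.not_adj_common
  twoLayered := Set.inter_comm C.verts H.verts ▸ hd.twoLayered
  exists_adj_common v hv := (hd.exists_adj_common v (Set.inter_comm _ _ ▸ hv)).symm

lemma adj_iff : G.Adj v w ↔ C.Adj v w ∨ H.Adj v w := by
  rw [← SimpleGraph.Subgraph.sup_adj, hd.sup_eq_top, SimpleGraph.Subgraph.top_adj]

lemma mem_or_mem (v : V) : v ∈ C.verts ∨ v ∈ H.verts := by
  rw [← Set.mem_union, ← SimpleGraph.Subgraph.verts_sup, hd.sup_eq_top]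
  trivial

lemma adj_left_of_notMem (hv : v ∉ H.verts) (h : G.Adj v w) : C.Adj v w :=
  (hd.adj_iff.1 h).resolve_right fun hH => hv hH.fst_mem

-- The pendant vertex cannot be common: its `C`- and `H`-neighbours would both be `v`.
lemma exists_pendant_of_adj_common (hv : v ∉ H.verts) (hw : w ∈ C.verts ∩ H.verts)
    (hvw : G.Adj v w) : ∃ p ∉ H.verts, C.Adj p v ∧ ∀ z, G.Adj p z → z = v := by
  obtain ⟨p, hvp, q, -, huniq⟩ := hd.twoLayered w hw v hvw.symm
  have hp : ∀ z, G.Adj p z → z = v := fun z hz => (huniq z hz).trans (huniq v hvp.symm).symm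
  have hpH : p ∉ H.verts := by
    intro hpH
    by_cases hpC : p ∈ C.verts
    · obtain ⟨⟨z₁, hz₁⟩, ⟨z₂, hz₂⟩⟩ := hd.exists_adj_common p ⟨hpC, hpH⟩
      rw [hp z₁ hz₁.adj_sub] at hz₁
      rw [hp z₂ hz₂.adj_sub] at hz₂
      exact Set.disjoint_left.mp hd.edgeSet_disjoint (show s(p, v) ∈ C.edgeSet from hz₁) hz₂
    · exact hv (hd.symm.adj_left_of_notMem hpC hvp.symm).snd_mem
  exact ⟨p, hpH, hd.adj_left_of_notMem hpH hvp.symm, hp⟩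

lemma stableTrace_subIsMaxStable [Fintype V] (hS : IsMaxStable G S) :
    SubIsMaxStable C (stableTrace C H S) := by
  refine subIsMaxStable_iff.2 ⟨⟨fun a ha => (mem_stableTrace.1 ha).1, ?_⟩, ?_⟩
  · intro a ha b hb hab
    obtain ⟨haC, haS | ⟨haH, -⟩⟩ := mem_stableTrace.1 ha
    · exact not_adj_of_mem_stableTrace hS.1 haS hb hab
    obtain ⟨hbC, hbS | ⟨hbH, -⟩⟩ := mem_stableTrace.1 hb
    · exact not_adj_of_mem_stableTrace hS.1 hbS ha hab.symm
    · exact hd.not_adj_common a ⟨haC, haH⟩ b ⟨hbC, hbH⟩ hab.adj_sub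
  · intro u hu hut
    simp only [mem_stableTrace, hu, true_and, not_or, not_and, not_forall, not_not,
      exists_prop] at hut
    obtain ⟨w, hwS, huw⟩ : ∃ w ∈ S, C.Adj u w := by
      by_cases huH : u ∈ H.verts
      · exact hut.2 huH
      · obtain ⟨w, hwS, huw⟩ := (isMaxStable_iff.1 hS).2 u hut.1
        exact ⟨w, hwS, hd.adj_left_of_notMem huH huw⟩
    exact ⟨w, mem_stableTrace.2 ⟨huw.snd_mem, Or.inl hwS⟩, huw⟩

lemma not_adj_of_mem_stableGlue_left (h₁ : SubIsStable C S₁)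
    (hv : v ∈ S₁ ∧ ∀ y ∈ S₂, ¬ H.Adj v y) (hw : w ∈ stableGlue C H S₁ S₂) : ¬ G.Adj v w := by
  intro hvw
  rcases mem_stableGlue.1 hw with ⟨hw₁, -⟩ | ⟨hw₂, hwno⟩ <;> rcases hd.adj_iff.1 hvw with hC | hH
  · exact h₁.2 v hv.1 w hw₁ hC
  · exact hd.not_adj_common v ⟨h₁.1 hv.1, hH.fst_mem⟩ w ⟨h₁.1 hw₁, hH.snd_mem⟩ hvw
  · exact hwno v hv.1 hC.symm
  · exact hv.2 w hw₂ hH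

lemma stableGlue_isStable (h₁ : SubIsStable C S₁) (h₂ : SubIsStable H S₂) :
    IsStable G (stableGlue C H S₁ S₂) := by
  intro v hv w hw
  rcases mem_stableGlue.1 hv with hv' | hv'
  · exact hd.not_adj_of_mem_stableGlue_left h₁ hv' hw
  · rw [stableGlue_comm] at hw
    exact hd.symm.not_adj_of_mem_stableGlue_left h₂ hv' hw

lemma exists_adj_mem_stableGlue (h₁ : SubIsMaxStable C S₁) (h₂ : SubIsStable H S₂)
    (hv : v ∈ C.verts) (hv₁ : v ∉ S₁) : ∃ u ∈ stableGlue C H S₁ S₂, G.Adj v u := by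
  obtain ⟨u, hu₁, huH, hvu⟩ : ∃ u ∈ S₁, u ∉ H.verts ∧ G.Adj v u := by
    obtain ⟨w, hw₁, hvw⟩ := (subIsMaxStable_iff.1 h₁).2 v hv hv₁
    by_cases hwH : w ∈ H.verts
    · have hvH : v ∉ H.verts := fun hvH =>
        hd.not_adj_common v ⟨hv, hvH⟩ w ⟨hvw.snd_mem, hwH⟩ hvw.adj_sub
      obtain ⟨p, hpH, hpv, hp⟩ := hd.exists_pendant_of_adj_common hvH ⟨hvw.snd_mem, hwH⟩ hvw.adj_sub
      have hp₁ : p ∈ S₁ := by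
        by_contra hp₁
        obtain ⟨z, hz₁, hpz⟩ := (subIsMaxStable_iff.1 h₁).2 p hpv.fst_mem hp₁
        exact hv₁ (hp z hpz.adj_sub ▸ hz₁)
      exact ⟨p, hp₁, hpH, hpv.adj_sub.symm⟩
    · exact ⟨w, hw₁, hwH, hvw.adj_sub⟩
  exact ⟨u, mem_stableGlue_of_mem_left h₂ hu₁ (absurd · huH), hvu⟩

lemma stableGlue_isMaxStable (h₁ : SubIsMaxStable C S₁) (h₂ : SubIsMaxStable H S₂) :
    IsMaxStable G (stableGlue C H S₁ S₂) := by
  refine isMaxStable_iff.2 ⟨hd.stableGlue_isStable h₁.1 h₂.1, fun v hv => ?_⟩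
  by_cases hC : v ∈ C.verts ∧ v ∉ S₁
  · exact hd.exists_adj_mem_stableGlue h₁ h₂.1 hC.1 hC.2
  by_cases hH : v ∈ H.verts ∧ v ∉ S₂
  · rw [stableGlue_comm]
    exact hd.symm.exists_adj_mem_stableGlue h₂ h₁.1 hH.1 hH.2
  push Not at hC hH
  refine absurd ?_ hv
  rcases hd.mem_or_mem v with hvC | hvH
  · exact mem_stableGlue_of_mem_left h₂.1 (hC hvC) hH
  · rw [stableGlue_comm]
    exact mem_stableGlue_of_mem_left h₁.1 (hH hvH) hC

lemma mem_of_mem_stableTrace_of_forall_not_adj [Fintype V] (hS : IsMaxStable G S)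
    (hv : v ∈ stableTrace C H S)
    (hno : ∀ y ∈ stableTrace H C S, ¬ H.Adj v y) : v ∈ S := by
  by_contra hvS
  obtain ⟨-, hvS' | ⟨-, hnoC⟩⟩ := mem_stableTrace.1 hv
  · exact hvS hvS'
  obtain ⟨w, hwS, hvw⟩ := (isMaxStable_iff.1 hS).2 v hvS
  rcases hd.adj_iff.1 hvw with hC | hH
  · exact hnoC w hwS hC
  · exact hno w (mem_stableTrace.2 ⟨hH.snd_mem, Or.inl hwS⟩) hH

lemma stableGlue_stableTrace [Fintype V] (hS : IsMaxStable G S) :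
    stableGlue C H (stableTrace C H S) (stableTrace H C S) = S := by
  ext v
  rw [mem_stableGlue]
  constructor
  · rintro (⟨hv, hno⟩ | ⟨hv, hno⟩)
    · exact hd.mem_of_mem_stableTrace_of_forall_not_adj hS hv hno
    · exact hd.symm.mem_of_mem_stableTrace_of_forall_not_adj hS hv hno
  · intro hv
    rcases hd.mem_or_mem v with hvC | hvH
    · exact Or.inl ⟨mem_stableTrace.2 ⟨hvC, Or.inl hv⟩,
        fun y hy => not_adj_of_mem_stableTrace hS.1 hv hy⟩
    · exact Or.inr ⟨mem_stableTrace.2 ⟨hvH, Or.inl hv⟩,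
        fun y hy => not_adj_of_mem_stableTrace hS.1 hv hy⟩

lemma stableTrace_stableGlue [Fintype V] (h₁ : SubIsMaxStable C S₁) (h₂ : SubIsStable H S₂) :
    stableTrace C H (stableGlue C H S₁ S₂) = S₁ := by
  ext v
  rw [mem_stableTrace]
  constructor
  · rintro ⟨hvC, hv | ⟨hvH, hno⟩⟩
    · rcases mem_stableGlue.1 hv with ⟨hv₁, -⟩ | ⟨-, hno₁⟩
      · exact hv₁
      by_contra hv₁
      obtain ⟨w, hw₁, hvw⟩ := (subIsMaxStable_iff.1 h₁).2 v hvC hv₁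
      exact hno₁ w hw₁ hvw
    by_contra hv₁
    obtain ⟨w, hw₁, hvw⟩ := (subIsMaxStable_iff.1 h₁).2 v hvC hv₁
    have hwH : w ∉ H.verts := fun hwH =>
      hd.not_adj_common v ⟨hvC, hvH⟩ w ⟨hvw.snd_mem, hwH⟩ hvw.adj_sub
    exact hno w (mem_stableGlue_of_mem_left h₂ hw₁ (absurd · hwH)) hvw
  · intro hv₁
    refine ⟨h₁.1.1 hv₁, or_iff_not_imp_left.2 fun hv => ⟨?_, fun w hw hvw => ?_⟩⟩
    · by_contra hvH
      exact hv (mem_stableGlue_of_mem_left h₂ hv₁ (absurd · hvH))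
    · rcases mem_stableGlue.1 hw with ⟨hw₁, -⟩ | ⟨-, hwno⟩
      · exact h₁.1.2 v hv₁ w hw₁ hvw
      · exact hwno v hv₁ hvw.symm

lemma invOn_stableGlue [Fintype V] :
    Set.InvOn (uncurry (stableGlue C H)) (fun S => (stableTrace C H S, stableTrace H C S))
      {S | IsMaxStable G S} {p | SubIsMaxStable C p.1 ∧ SubIsMaxStable H p.2} := by
  refine ⟨fun S hS => hd.stableGlue_stableTrace hS, fun p ⟨h₁, h₂⟩ => Prod.ext ?_ ?_⟩
  · exact hd.stableTrace_stableGlue h₁ h₂.1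
  · rw [uncurry_apply_pair, stableGlue_comm]
    exact hd.symm.stableTrace_stableGlue h₂ h₁.1

lemma numMaxStableCont_eq_of_mem_diff [Fintype V] {b : V} (hb : b ∈ C.verts \ H.verts) :
    numMaxStableCont G b = subNumMaxStableCont C b * subNumMaxStable H := by
  rw [numMaxStableCont, subNumMaxStableCont, subNumMaxStable, ← Set.ncard_prod]
  refine Set.BijOn.ncard_eq (Set.InvOn.bijOn (hd.invOn_stableGlue.mono ?_ ?_) ?_ ?_)
  · exact fun S hS => hS.1
  · exact fun p hp => ⟨hp.1.1, hp.2⟩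
  · exact fun S ⟨hS, hbS⟩ => ⟨⟨hd.stableTrace_subIsMaxStable hS,
      mem_stableTrace.2 ⟨hb.1, Or.inl hbS⟩⟩, hd.symm.stableTrace_subIsMaxStable hS⟩
  · exact fun p ⟨⟨h₁, hb₁⟩, h₂⟩ => ⟨hd.stableGlue_isMaxStable h₁ h₂,
      mem_stableGlue_of_mem_left h₂.1 hb₁ (absurd · hb.2)⟩

lemma numMaxStableCont_le_of_mem_inter [Fintype V] (ha : a ∈ C.verts ∩ H.verts) :
    numMaxStableCont G a ≤ subNumMaxStableCont C a * subNumMaxStableCont H a := by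
  rw [numMaxStableCont, subNumMaxStableCont, subNumMaxStableCont, ← Set.ncard_prod]
  refine Set.ncard_le_ncard_of_injOn _ ?_ (hd.invOn_stableGlue.1.injOn.mono fun S hS => hS.1)
  exact fun S ⟨hS, haS⟩ =>
    ⟨⟨hd.stableTrace_subIsMaxStable hS, mem_stableTrace.2 ⟨ha.1, Or.inl haS⟩⟩,
      hd.symm.stableTrace_subIsMaxStable hS, mem_stableTrace.2 ⟨ha.2, Or.inl haS⟩⟩

end IsLayeredDecomp

end Decomposition

theorem stmt_13_general {V : Type*} [Fintype V] (G : SimpleGraph V)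
    (X Y : Set V)
    (hdisj : Disjoint X Y)
    (hbip : ∀ a b, G.Adj a b → (a ∈ X ∧ b ∈ Y) ∨ (a ∈ Y ∧ b ∈ X))
    (C H : G.Subgraph)
    (hedge : Disjoint C.edgeSet H.edgeSet)
    (hunion : C ⊔ H = ⊤)
    (hclass : C.verts ∩ H.verts ⊆ X)
    (h2l : ∀ v ∈ C.verts ∩ H.verts, TwoLayered G v)
    (hnbr : ∀ v ∈ C.verts ∩ H.verts, (∃ w, C.Adj v w) ∧ (∃ w, H.Adj v w)) :
    (∀ b ∈ C.verts \ H.verts,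
        numMaxStableCont G b = subNumMaxStableCont C b * subNumMaxStable H) ∧
    (∀ a ∈ C.verts ∩ H.verts,
        numMaxStableCont G a ≤ subNumMaxStableCont C a * subNumMaxStableCont H a) := by
  have hd : IsLayeredDecomp C H := ⟨hedge, hunion,
    fun a ha b hb => not_adj_of_mem_of_mem hdisj hbip (hclass ha) (hclass hb), h2l, hnbr⟩
  exact ⟨fun b hb => hd.numMaxStableCont_eq_of_mem_diff hb,
    fun a ha => hd.numMaxStableCont_le_of_mem_inter ha⟩

theorem stmt_13 {V : Type*} [Fintype V] [DecidableEq V] (G : SimpleGraph V)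
    (X Y : Set V)
    (hdisj : Disjoint X Y) (hcov : X ∪ Y = Set.univ)
    (hbip : ∀ a b, G.Adj a b → (a ∈ X ∧ b ∈ Y) ∨ (a ∈ Y ∧ b ∈ X))
    (C H : G.Subgraph)
    (hedge : Disjoint C.edgeSet H.edgeSet)
    (hunion : C ⊔ H = ⊤)
    (hclass : C.verts ∩ H.verts ⊆ X)
    (h2l : ∀ v ∈ C.verts ∩ H.verts, TwoLayered G v)
    (hnbr : ∀ v ∈ C.verts ∩ H.verts, (∃ w, C.Adj v w) ∧ (∃ w, H.Adj v w)) :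
    (∀ b ∈ C.verts \ H.verts,
        numMaxStableCont G b = subNumMaxStableCont C b * subNumMaxStable H) ∧
    (∀ a ∈ C.verts ∩ H.verts,
        numMaxStableCont G a ≤ subNumMaxStableCont C a * subNumMaxStableCont H a) :=
  stmt_13_general G X Y hdisj hbip C H hedge hunion hclass h2l hnbr
end

section
/- Let G be a bipartite graph and v ∈ V(G) such that v has at least one pendant neighbor and every non-pendant neighbor of v is 2-layered. Then v and all neighbors of v are rare in G, i.e., each lies in at most half of the maximal stable sets of G. -/
open Classical in
/-- The neighbors of `v` dominated in `S` only through `v`. -/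
noncomputable def auxD {V : Type*} [Fintype V] (G : SimpleGraph V) (v : V) (S : Finset V) :
    Finset V :=
  Finset.univ.filter (fun y => G.Adj v y ∧ ∀ z ∈ S, G.Adj y z → z = v)

open Classical in
/-- The non-neighbors of `v` inside `T`. -/
noncomputable def auxF {V : Type*} (G : SimpleGraph V) (v : V) (T : Finset V) : Finset V :=
  T.filter (fun x => ¬ G.Adj v x)

lemma mem_auxD {V : Type*} [Fintype V] {G : SimpleGraph V} {v y : V} {S : Finset V} :
    y ∈ auxD G v S ↔ G.Adj v y ∧ ∀ z ∈ S, G.Adj y z → z = v := by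
  simp [auxD]

lemma mem_auxF {V : Type*} {G : SimpleGraph V} {v x : V} {T : Finset V} :
    x ∈ auxF G v T ↔ x ∈ T ∧ ¬ G.Adj v x := by
  simp [auxF]

theorem stmt_14 {V : Type*} [Fintype V] [DecidableEq V] (G : SimpleGraph V)
    (X Y : Set V)
    (hdisj : Disjoint X Y) (hcov : X ∪ Y = Set.univ)
    (hbip : ∀ a b, G.Adj a b → (a ∈ X ∧ b ∈ Y) ∨ (a ∈ Y ∧ b ∈ X))
    (v : V)
    (hpend : ∃ u, G.Adj v u ∧ IsPendant G u)
    (h2l : ∀ w, G.Adj v w → ¬ IsPendant G w → TwoLayered G w) :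
    2 * numMaxStableCont G v ≤ numMaxStable G ∧
      ∀ w, G.Adj v w → 2 * numMaxStableCont G w ≤ numMaxStable G := by
  classical
  obtain ⟨u, huv, hup⟩ := hpend
  -- a pendant vertex has a unique neighbor
  have pend_eq : ∀ p z y : V, IsPendant G p → G.Adj p z → G.Adj p y → y = z := by
    rintro p z y ⟨w, hw, hwuniq⟩ hz hy
    rw [hwuniq y hy, hwuniq z hz]
  -- two common neighbors of v are never adjacent (bipartiteness)
  have hd : ∀ a : V, a ∈ X → a ∈ Y → False := fun a ha hb => Set.disjoint_left.mp hdisj ha hb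
  have hnn : ∀ x y : V, G.Adj v x → G.Adj v y → ¬ G.Adj x y := by
    intro x y hx hy hxy
    rcases hbip v x hx with h1 | h1 <;> rcases hbip v y hy with h2 | h2 <;>
      rcases hbip x y hxy with h3 | h3 <;>
      exact hd _ (by tauto) (by tauto)
  -- a maximal stable set dominates every outside vertex
  have hmax_dom : ∀ S : Finset V, IsMaxStable G S → ∀ z, z ∉ S → ∃ t ∈ S, G.Adj z t := by
    intro S hS z hz
    by_contra h
    push_neg at h
    have hstab : IsStable G (insert z S) := by
      intro a ha b hb hab
      rcases Finset.mem_insert.mp ha with ha' | ha'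
      · rcases Finset.mem_insert.mp hb with hb' | hb'
        · rw [ha', hb'] at hab; exact G.irrefl hab
        · rw [ha'] at hab; exact h b hb' hab
      · rcases Finset.mem_insert.mp hb with hb' | hb'
        · rw [hb'] at hab; exact h a ha' hab.symm
        · exact hS.1 a ha' b hb' hab
    have heq := hS.2 _ hstab (Finset.subset_insert _ _)
    exact hz (by rw [heq]; exact Finset.mem_insert_self z S)
  -- a dominating stable set is maximal
  have hmax_of : ∀ S : Finset V, IsStable G S → (∀ z, z ∉ S → ∃ t ∈ S, G.Adj z t) →
      IsMaxStable G S := by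
    intro S hst hdom
    refine ⟨hst, fun T hT hsub => Finset.Subset.antisymm hsub fun x hx => ?_⟩
    by_contra hxS
    obtain ⟨t, ht, hxt⟩ := hdom x hxS
    exact hT x hx t (hsub ht) hxt
  set A := {S : Finset V | IsMaxStable G S ∧ v ∈ S} with hA_def
  set B := {S : Finset V | IsMaxStable G S ∧ v ∉ S} with hB_def
  -- φ : A → B
  have hφmem : ∀ S ∈ A, (S.erase v ∪ auxD G v S) ∈ B := by
    rintro S ⟨hS, hvS⟩
    constructor
    · apply hmax_of
      · intro a ha b hb hab
        rcases Finset.mem_union.mp ha with ha | ha <;> rcases Finset.mem_union.mp hb with hb | hb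
        · exact hS.1 a (Finset.mem_of_mem_erase ha) b (Finset.mem_of_mem_erase hb) hab
        · exact (Finset.ne_of_mem_erase ha)
            ((mem_auxD.mp hb).2 a (Finset.mem_of_mem_erase ha) hab.symm)
        · exact (Finset.ne_of_mem_erase hb)
            ((mem_auxD.mp ha).2 b (Finset.mem_of_mem_erase hb) hab)
        · exact hnn a b (mem_auxD.mp ha).1 (mem_auxD.mp hb).1 hab
      · intro z hz
        by_cases hzv : z = v
        · subst hzv
          exact ⟨u, Finset.mem_union_right _
            (mem_auxD.mpr ⟨huv, fun t ht hut => pend_eq u z t hup huv.symm hut⟩), huv⟩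
        · have hzS : z ∉ S := fun h => hz (Finset.mem_union_left _ (Finset.mem_erase.mpr ⟨hzv, h⟩))
          obtain ⟨t, ht, hzt⟩ := hmax_dom S hS z hzS
          by_cases hall : ∀ t' ∈ S, G.Adj z t' → t' = v
          · have htv : t = v := hall t ht hzt
            subst htv
            exact absurd (Finset.mem_union_right _ (mem_auxD.mpr ⟨hzt.symm, hall⟩)) hz
          · push_neg at hall
            obtain ⟨t', ht', hzt', htv⟩ := hall
            exact ⟨t', Finset.mem_union_left _ (Finset.mem_erase.mpr ⟨htv, ht'⟩), hzt'⟩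
    · intro hmem
      rcases Finset.mem_union.mp hmem with h | h
      · exact (Finset.mem_erase.mp h).1 rfl
      · exact G.irrefl (mem_auxD.mp h).1
  -- φ is injective on A
  have hφback : ∀ S ∈ A, insert v ((S.erase v ∪ auxD G v S).filter (fun x => ¬ G.Adj v x)) = S := by
    rintro S ⟨hS, hvS⟩
    ext x
    simp only [Finset.mem_insert, Finset.mem_filter, Finset.mem_union, Finset.mem_erase]
    constructor
    · rintro (rfl | ⟨(⟨hxv, hxS⟩ | hxD), hnadj⟩)
      · exact hvS
      · exact hxS
      · exact absurd (mem_auxD.mp hxD).1 hnadj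
    · intro hxS
      by_cases hxv : x = v
      · exact Or.inl hxv
      · exact Or.inr ⟨Or.inl ⟨hxv, hxS⟩, hS.1 v hvS x hxS⟩
  have hφinj : Set.InjOn (fun S => S.erase v ∪ auxD G v S) A := by
    intro S hS S' hS' h
    have := hφback S hS
    rw [← hφback S hS, ← hφback S' hS']
    simp only at h
    rw [h]
  -- ψ : B → A
  have hψmem : ∀ T ∈ B, insert v (auxF G v T) ∈ A := by
    rintro T ⟨hT, hvT⟩
    have hFsub : auxF G v T ⊆ T := Finset.filter_subset _ _
    refine ⟨?_, Finset.mem_insert_self _ _⟩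
    apply hmax_of
    · intro a ha b hb hab
      rcases Finset.mem_insert.mp ha with rfl | ha
      · rcases Finset.mem_insert.mp hb with rfl | hb
        · exact G.irrefl hab
        · exact (mem_auxF.mp hb).2 hab
      · rcases Finset.mem_insert.mp hb with rfl | hb
        · exact (mem_auxF.mp ha).2 hab.symm
        · exact hT.1 a (hFsub ha) b (hFsub hb) hab
    · intro z hz
      have hzv : z ≠ v := fun h => hz (h ▸ Finset.mem_insert_self _ _)
      by_cases hvz : G.Adj v z
      · exact ⟨v, Finset.mem_insert_self _ _, hvz.symm⟩
      · have hzT : z ∉ T := fun h => hz (Finset.mem_insert_of_mem (mem_auxF.mpr ⟨h, hvz⟩))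
        obtain ⟨t, ht, hzt⟩ := hmax_dom T hT z hzT
        by_cases hvt : G.Adj v t
        · by_cases htp : IsPendant G t
          · exact absurd (pend_eq t v z htp hvt.symm hzt.symm) hzv
          · obtain ⟨p, hzp, hp⟩ := h2l t hvt htp z hzt.symm
            by_cases hpT : p ∈ T
            · have hvp : ¬ G.Adj v p := fun h =>
                hzv (pend_eq p z v hp hzp.symm h.symm).symm
              exact ⟨p, Finset.mem_insert_of_mem (mem_auxF.mpr ⟨hpT, hvp⟩), hzp⟩
            · obtain ⟨t', ht', hpt'⟩ := hmax_dom T hT p hpT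
              have htz : t' = z := pend_eq p z t' hp hzp.symm hpt'
              rw [htz] at ht'
              exact absurd ht' hzT
        · exact ⟨t, Finset.mem_insert_of_mem (mem_auxF.mpr ⟨ht, hvt⟩), hzt⟩
  -- ψ is injective on B
  have hkey : ∀ T ∈ B, ∀ x, x ∈ T ↔
      (x ∈ auxF G v T ∨ (G.Adj v x ∧ ∀ y ∈ auxF G v T, ¬ G.Adj x y)) := by
    rintro T ⟨hT, hvT⟩ x
    constructor
    · intro hxT
      by_cases hvx : G.Adj v x
      · exact Or.inr ⟨hvx, fun y hy => hT.1 x hxT y (Finset.filter_subset _ _ hy)⟩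
      · exact Or.inl (mem_auxF.mpr ⟨hxT, hvx⟩)
    · rintro (hx | ⟨hvx, hall⟩)
      · exact (mem_auxF.mp hx).1
      · by_contra hxT
        obtain ⟨t, ht, hxt⟩ := hmax_dom T hT x hxT
        by_cases hvt : G.Adj v t
        · exact hnn x t hvx hvt hxt
        · exact hall t (mem_auxF.mpr ⟨ht, hvt⟩) hxt
  have hψinj : Set.InjOn (fun T => insert v (auxF G v T)) B := by
    intro T hT T' hT' h
    have hvF : ∀ T₀ : Finset V, T₀ ∈ B → v ∉ auxF G v T₀ := fun T₀ h₀ hv =>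
      h₀.2 (mem_auxF.mp hv).1
    simp only at h
    have hFF : auxF G v T = auxF G v T' := by
      have h2 := congrArg (fun s : Finset V => Finset.erase s v) h
      simpa [Finset.erase_insert (hvF T hT), Finset.erase_insert (hvF T' hT')] using h2
    ext x
    rw [hkey T hT x, hkey T' hT' x, hFF]
  -- counting
  have hA_fin : A.Finite := Set.toFinite _
  have hB_fin : B.Finite := Set.toFinite _
  have hAB : A.ncard ≤ B.ncard :=
    Set.ncard_le_ncard_of_injOn (fun S => S.erase v ∪ auxD G v S) hφmem hφinj hB_fin
  have hBA : B.ncard ≤ A.ncard :=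
    Set.ncard_le_ncard_of_injOn (fun T => insert v (auxF G v T)) hψmem hψinj hA_fin
  have htot : numMaxStable G = A.ncard + B.ncard := by
    have hsplit : {S : Finset V | IsMaxStable G S} = A ∪ B := by
      ext S
      simp only [hA_def, hB_def, Set.mem_setOf_eq, Set.mem_union]
      tauto
    have hdisjAB : Disjoint A B := by
      rw [Set.disjoint_left]
      rintro S ⟨_, h1⟩ ⟨_, h2⟩
      exact h2 h1
    rw [numMaxStable, hsplit, Set.ncard_union_eq hdisjAB hA_fin hB_fin]
  have hcv : numMaxStableCont G v = A.ncard := rfl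
  constructor
  · omega
  · intro w hw
    have hsub : {S : Finset V | IsMaxStable G S ∧ w ∈ S} ⊆ B := by
      rintro S ⟨hS, hwS⟩
      exact ⟨hS, fun hvS => hS.1 v hvS w hwS hw⟩
    have hcw : numMaxStableCont G w ≤ B.ncard := Set.ncard_le_ncard hsub hB_fin
    omega
end

section
/- Let G be a bipartite graph with bipartition X ∪ Y and no isolated vertices, such that every vertex of X is adjacent to at least one pendant vertex. Then every vertex of G is rare: for each v ∈ V(G), at most half of the maximal stable sets of G contain v. -/
section Aux
set_option linter.unusedSectionVars false

open Classical in
/-- The canonical maximal stable set attached to a subset `A` of `X`. -/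
noncomputable def mySA {V : Type*} [Fintype V] (G : SimpleGraph V) (Y : Set V) (A : Finset V) :
    Finset V :=
  Set.toFinset {u | u ∈ A ∨ (u ∈ Y ∧ ∀ a ∈ A, ¬ G.Adj a u)}

lemma mem_mySA {V : Type*} [Fintype V] {G : SimpleGraph V} {Y : Set V} {A : Finset V} {u : V} :
    u ∈ mySA G Y A ↔ u ∈ A ∨ (u ∈ Y ∧ ∀ a ∈ A, ¬ G.Adj a u) := by
  simp [mySA]

variable {V : Type*} [Fintype V] [DecidableEq V] {G : SimpleGraph V} {X Y : Set V}
  {A : Finset V}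

lemma not_mem_both (hdisj : Disjoint X Y) {u : V} (hX : u ∈ X) (hY : u ∈ Y) : False :=
  Set.disjoint_left.mp hdisj hX hY

lemma mySA_stable (hdisj : Disjoint X Y)
    (hbip : ∀ a b, G.Adj a b → (a ∈ X ∧ b ∈ Y) ∨ (a ∈ Y ∧ b ∈ X))
    (hA : ↑A ⊆ X) : IsStable G (mySA G Y A) := by
  intro a ha b hb hadj
  rw [mem_mySA] at ha hb
  rcases ha with ha | ⟨haY, haf⟩
  · rcases hb with hb | ⟨hbY, hbf⟩
    · rcases hbip a b hadj with ⟨h1, h2⟩ | ⟨h1, h2⟩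
      · exact not_mem_both hdisj (hA hb) h2
      · exact not_mem_both hdisj (hA ha) h1
    · exact hbf a ha hadj
  · rcases hb with hb | ⟨hbY, hbf⟩
    · exact haf b hb hadj.symm
    · rcases hbip a b hadj with ⟨h1, h2⟩ | ⟨h1, h2⟩
      · exact not_mem_both hdisj h1 haY
      · exact not_mem_both hdisj h2 hbY

lemma mySA_maxStable (hdisj : Disjoint X Y) (hcov : X ∪ Y = Set.univ)
    (hbip : ∀ a b, G.Adj a b → (a ∈ X ∧ b ∈ Y) ∨ (a ∈ Y ∧ b ∈ X))
    (hpend : ∀ x ∈ X, ∃ u, G.Adj x u ∧ IsPendant G u)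
    (hA : ↑A ⊆ X) : IsMaxStable G (mySA G Y A) := by
  refine ⟨mySA_stable hdisj hbip hA, fun T hT hsub => ?_⟩
  by_contra hne
  obtain ⟨t, htT, htS⟩ : ∃ t ∈ T, t ∉ mySA G Y A := by
    by_contra h
    push_neg at h
    exact hne (Finset.Subset.antisymm hsub h)
  have htX : t ∈ X ∨ t ∈ Y := by
    have := Set.mem_univ t; rw [← hcov] at this; exact this
  rcases htX with htX | htY
  · obtain ⟨u, hu, w, hw, huniq⟩ := hpend t htX
    have huY : u ∈ Y := by
      rcases hbip t u hu with ⟨_, h⟩ | ⟨h, _⟩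
      · exact h
      · exact absurd htX (fun hx => not_mem_both hdisj hx h)
    have huS : u ∈ mySA G Y A := by
      rw [mem_mySA]
      right
      refine ⟨huY, fun a ha hadj => ?_⟩
      have : a = t := (huniq a hadj.symm).trans (huniq t hu.symm).symm
      subst this
      exact htS (mem_mySA.mpr (Or.inl ha))
    exact hT t htT u (hsub huS) hu
  · have : ¬ (t ∈ A ∨ (t ∈ Y ∧ ∀ a ∈ A, ¬ G.Adj a t)) := fun h => htS (mem_mySA.mpr h)
    push_neg at this
    obtain ⟨a, ha, hadj⟩ := this.2 htY
    exact hT a (hsub (mem_mySA.mpr (Or.inl ha))) t htT hadj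

open Classical in
/-- Recover `A` from `mySA A`. -/
lemma mySA_filter (hdisj : Disjoint X Y) (hA : ↑A ⊆ X) :
    (mySA G Y A).filter (fun u => u ∈ X) = A := by
  classical
  ext u
  simp only [Finset.mem_filter, mem_mySA]
  constructor
  · rintro ⟨h1 | ⟨hY, _⟩, h2⟩
    · exact h1
    · exact absurd hY (fun hy => not_mem_both hdisj h2 hy)
  · intro h
    exact ⟨Or.inl h, hA h⟩

open Classical in
lemma maxStable_eq_mySA (hdisj : Disjoint X Y) (hcov : X ∪ Y = Set.univ)
    (hbip : ∀ a b, G.Adj a b → (a ∈ X ∧ b ∈ Y) ∨ (a ∈ Y ∧ b ∈ X))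
    {S : Finset V} (hS : IsMaxStable G S) :
    S = mySA G Y (S.filter (fun u => u ∈ X)) := by
  classical
  have hA : ↑(S.filter (fun u => u ∈ X)) ⊆ X := by
    intro u hu
    simp only [Finset.coe_filter, Set.mem_setOf_eq] at hu
    exact hu.2
  refine hS.2 _ (mySA_stable hdisj hbip hA) ?_
  intro s hs
  rw [mem_mySA]
  have hsXY : s ∈ X ∨ s ∈ Y := by
    have := Set.mem_univ s; rw [← hcov] at this; exact this
  rcases hsXY with hsX | hsY
  · exact Or.inl (Finset.mem_filter.mpr ⟨hs, hsX⟩)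
  · right
    exact ⟨hsY, fun a ha hadj => hS.1 a (Finset.mem_filter.mp ha).1 s hs hadj⟩

end Aux

lemma count_aux {V : Type*} [Fintype V] {G : SimpleGraph V} {v : V}
    (f : Finset V → Finset V)
    (hmaps : ∀ S, IsMaxStable G S → v ∈ S → IsMaxStable G (f S) ∧ v ∉ f S)
    (hinj : ∀ S T, IsMaxStable G S → v ∈ S → IsMaxStable G T → v ∈ T → f S = f T → S = T) :
    2 * numMaxStableCont G v ≤ numMaxStable G := by
  classical
  set C : Set (Finset V) := {S | IsMaxStable G S ∧ v ∈ S} with hC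
  set D : Set (Finset V) := {S | IsMaxStable G S ∧ v ∉ S} with hD
  have himg : f '' C ⊆ D := by
    rintro _ ⟨S, ⟨hS, hv⟩, rfl⟩
    exact ⟨(hmaps S hS hv).1, (hmaps S hS hv).2⟩
  have hinjOn : Set.InjOn f C := by
    rintro S ⟨hS, hvS⟩ T ⟨hT, hvT⟩ h
    exact hinj S T hS hvS hT hvT h
  have h1 : C.ncard ≤ D.ncard := by
    rw [← Set.ncard_image_of_injOn hinjOn]
    exact Set.ncard_le_ncard himg (Set.toFinite D)
  have hCD : Disjoint C D := by
    rw [Set.disjoint_left]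
    rintro S ⟨hS, hv⟩ ⟨_, hv'⟩
    exact hv' hv
  have hunion : C ∪ D = {S : Finset V | IsMaxStable G S} := by
    ext S
    simp only [hC, hD, Set.mem_union, Set.mem_setOf_eq]
    tauto
  have h2 : numMaxStable G = C.ncard + D.ncard := by
    rw [numMaxStable, ← hunion, Set.ncard_union_eq hCD (Set.toFinite C) (Set.toFinite D)]
  have h3 : numMaxStableCont G v = C.ncard := rfl
  omega

theorem stmt_15 {V : Type*} [Fintype V] [DecidableEq V] (G : SimpleGraph V)
    (X Y : Set V)
    (hdisj : Disjoint X Y) (hcov : X ∪ Y = Set.univ)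
    (hbip : ∀ a b, G.Adj a b → (a ∈ X ∧ b ∈ Y) ∨ (a ∈ Y ∧ b ∈ X))
    (hiso : ∀ v : V, ∃ w, G.Adj v w)
    (hpend : ∀ x ∈ X, ∃ u, G.Adj x u ∧ IsPendant G u) :
    ∀ v : V, 2 * numMaxStableCont G v ≤ numMaxStable G := by
  classical
  intro v
  have hvXY : v ∈ X ∨ v ∈ Y := by
    have := Set.mem_univ v; rw [← hcov] at this; exact this
  have hAfsub : ∀ S : Finset V, ↑(S.filter (fun u => u ∈ X)) ⊆ X := by
    intro S u hu
    simp only [Finset.coe_filter, Set.mem_setOf_eq] at hu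
    exact hu.2
  rcases hvXY with hvX | hvY
  · -- v ∈ X : erase v
    apply count_aux (fun S => mySA G Y ((S.filter (fun u => u ∈ X)).erase v))
    · intro S hS hv
      have hA : ↑((S.filter (fun u => u ∈ X)).erase v) ⊆ X :=
        fun u hu => hAfsub S (Finset.erase_subset _ _ hu)
      refine ⟨mySA_maxStable hdisj hcov hbip hpend hA, ?_⟩
      rw [mem_mySA]
      rintro (h | ⟨hY, _⟩)
      · exact (Finset.notMem_erase v _) h
      · exact not_mem_both hdisj hvX hY
    · intro S T hS hvS hT hvT h
      have hA : ∀ (W : Finset V), ↑((W.filter (fun u => u ∈ X)).erase v) ⊆ X :=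
        fun W u hu => hAfsub W (Finset.erase_subset _ _ hu)
      have h' : (S.filter (fun u => u ∈ X)).erase v = (T.filter (fun u => u ∈ X)).erase v := by
        have := congrArg (fun W => W.filter (fun u => u ∈ X)) h
        simpa [mySA_filter hdisj (hA S), mySA_filter hdisj (hA T)] using this
      have hfeq : S.filter (fun u => u ∈ X) = T.filter (fun u => u ∈ X) := by
        ext u
        by_cases huv : u = v
        · subst huv
          simp [Finset.mem_filter, hvS, hvT, hvX]
        · constructor
          · intro hu
            have : u ∈ (T.filter (fun u => u ∈ X)).erase v := by
              rw [← h']; exact Finset.mem_erase.mpr ⟨huv, hu⟩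
            exact (Finset.mem_erase.mp this).2
          · intro hu
            have : u ∈ (S.filter (fun u => u ∈ X)).erase v := by
              rw [h']; exact Finset.mem_erase.mpr ⟨huv, hu⟩
            exact (Finset.mem_erase.mp this).2
      rw [maxStable_eq_mySA hdisj hcov hbip hS, maxStable_eq_mySA hdisj hcov hbip hT, hfeq]
  · -- v ∈ Y : insert a neighbor x₀
    obtain ⟨x₀, hx₀⟩ := hiso v
    have hx₀X : x₀ ∈ X := by
      rcases hbip v x₀ hx₀ with ⟨h1, _⟩ | ⟨_, h2⟩
      · exact absurd h1 (fun h => not_mem_both hdisj h hvY)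
      · exact h2
    apply count_aux (fun S => mySA G Y (insert x₀ (S.filter (fun u => u ∈ X))))
    · intro S hS hv
      have hA : ↑(insert x₀ (S.filter (fun u => u ∈ X))) ⊆ X := by
        intro u hu
        rw [Finset.coe_insert] at hu
        rcases hu with rfl | hu
        · exact hx₀X
        · exact hAfsub S hu
      refine ⟨mySA_maxStable hdisj hcov hbip hpend hA, ?_⟩
      rw [mem_mySA]
      rintro (h | ⟨hY, hall⟩)
      · exact not_mem_both hdisj (hA h) hvY
      · exact hall x₀ (Finset.mem_insert_self _ _) hx₀.symm
    · intro S T hS hvS hT hvT h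
      have hA : ∀ (W : Finset V), ↑(insert x₀ (W.filter (fun u => u ∈ X))) ⊆ X := by
        intro W u hu
        rw [Finset.coe_insert] at hu
        rcases hu with rfl | hu
        · exact hx₀X
        · exact hAfsub W hu
      have h' : insert x₀ (S.filter (fun u => u ∈ X)) = insert x₀ (T.filter (fun u => u ∈ X)) := by
        have := congrArg (fun W => W.filter (fun u => u ∈ X)) h
        simpa [mySA_filter hdisj (hA S), mySA_filter hdisj (hA T)] using this
      have hx₀S : x₀ ∉ S := fun hmem => hS.1 v hvS x₀ hmem hx₀
      have hx₀T : x₀ ∉ T := fun hmem => hT.1 v hvT x₀ hmem hx₀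
      have hfeq : S.filter (fun u => u ∈ X) = T.filter (fun u => u ∈ X) := by
        ext u
        by_cases hux : u = x₀
        · subst hux
          simp [Finset.mem_filter, hx₀S, hx₀T]
        · constructor
          · intro hu
            have : u ∈ insert x₀ (T.filter (fun u => u ∈ X)) := by
              rw [← h']; exact Finset.mem_insert_of_mem hu
            rcases Finset.mem_insert.mp this with h | h
            · exact absurd h hux
            · exact h
          · intro hu
            have : u ∈ insert x₀ (S.filter (fun u => u ∈ X)) := by
              rw [h']; exact Finset.mem_insert_of_mem hu
            rcases Finset.mem_insert.mp this with h | h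
            · exact absurd h hux
            · exact h
      rw [maxStable_eq_mySA hdisj hcov hbip hS, maxStable_eq_mySA hdisj hcov hbip hT, hfeq]
end

section
/- Let F be a finite family of finite sets such that every member set of F contains an element of frequency 1 (an element appearing in exactly one member of F). Then the union-closed family ⟨F⟩ generated by F contains an abundant element: some element of the universe belongs to at least half of the sets in ⟨F⟩. -/
/-- The union-closed family generated by `F`: all unions of subfamilies of `F`
(including the empty union `∅`). -/
def genFam {α : Type*} [DecidableEq α] (F : Finset (Finset α)) : Set (Finset α) :=
  {A : Finset α | ∃ F' ⊆ F, A = F'.sup id}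

theorem stmt_16 {α : Type*} [DecidableEq α] (F : Finset (Finset α)) (hne : F.Nonempty)
    (hfreq : ∀ S ∈ F, ∃ x ∈ S, (F.filter (fun T => x ∈ T)).card = 1) :
    ∃ x ∈ F.sup id,
      Set.ncard (genFam F) ≤ 2 * Set.ncard {A ∈ genFam F | x ∈ A} := by
  classical
  obtain ⟨S0, hS0⟩ := hne
  obtain ⟨x0, hx0, hc0⟩ := hfreq S0 hS0
  have h : ∀ S : Finset α, ∃ x : α, S ∈ F → x ∈ S ∧ (F.filter (fun T => x ∈ T)).card = 1 := by
    intro S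
    by_cases hS : S ∈ F
    · obtain ⟨x, hx, hc⟩ := hfreq S hS
      exact ⟨x, fun _ => ⟨hx, hc⟩⟩
    · exact ⟨x0, fun h => absurd h hS⟩
  choose xf hxf using h
  have key : ∀ T ∈ F, ∀ U ∈ F, (xf T ∈ U ↔ U = T) := by
    intro T hT U hU
    obtain ⟨hmem, hcard⟩ := hxf T hT
    obtain ⟨a, ha⟩ := Finset.card_eq_one.mp hcard
    have hTa : T = a := by
      have : T ∈ F.filter (fun U => xf T ∈ U) := Finset.mem_filter.mpr ⟨hT, hmem⟩
      simpa [ha] using this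
    constructor
    · intro hx
      have : U ∈ F.filter (fun U => xf T ∈ U) := Finset.mem_filter.mpr ⟨hU, hx⟩
      rw [ha, Finset.mem_singleton] at this
      rw [this, ← hTa]
    · rintro rfl; exact hmem
  set u : Finset (Finset α) → Finset α := fun F' => F'.sup id with hu
  have memsup : ∀ F' ⊆ F, ∀ T ∈ F, (xf T ∈ u F' ↔ T ∈ F') := by
    intro F' hF' T hT
    simp only [hu, Finset.mem_sup, id]
    constructor
    · rintro ⟨U, hU, hxU⟩
      have := (key T hT U (hF' hU)).mp hxU
      rwa [← this]
    · intro h; exact ⟨T, h, (key T hT T hT).mpr rfl⟩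
  have uinj : Set.InjOn u ↑F.powerset := by
    intro F' hF' F'' hF'' heq
    rw [Finset.mem_coe, Finset.mem_powerset] at hF' hF''
    ext T
    by_cases hTF : T ∈ F
    · constructor
      · intro hT
        have h1 := (memsup F' hF' T hTF).mpr hT
        rw [heq] at h1
        exact (memsup F'' hF'' T hTF).mp h1
      · intro hT
        have h1 := (memsup F'' hF'' T hTF).mpr hT
        rw [← heq] at h1
        exact (memsup F' hF' T hTF).mp h1
    · constructor
      · intro hT; exact absurd (hF' hT) hTF
      · intro hT; exact absurd (hF'' hT) hTF
  set G : Finset (Finset α) := F.powerset.image u with hG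
  have hgen : genFam F = ↑G := by
    ext A
    simp only [genFam, Set.mem_setOf_eq, hG, Finset.coe_image, Set.mem_image,
      Finset.mem_coe, Finset.mem_powerset]
    constructor
    · rintro ⟨F', h1, h2⟩; exact ⟨F', h1, h2.symm⟩
    · rintro ⟨F', h1, h2⟩; exact ⟨F', h1, h2.symm⟩
  set x : α := xf S0 with hx
  have hxS0 : x ∈ S0 := (hxf S0 hS0).1
  refine ⟨x, Finset.mem_sup.mpr ⟨S0, hS0, hxS0⟩, ?_⟩
  -- counting
  set Gx : Finset (Finset α) := G.filter (fun A => x ∈ A) with hGx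
  set Gc : Finset (Finset α) := G.filter (fun A => ¬ x ∈ A) with hGc
  have hrep : ∀ A ∈ G, ∃ F' ⊆ F, A = u F' := by
    intro A hA
    obtain ⟨F', h1, h2⟩ := Finset.mem_image.mp hA
    exact ⟨F', Finset.mem_powerset.mp h1, h2.symm⟩
  have hmap : ∀ A ∈ Gc, A ∪ S0 ∈ Gx := by
    intro A hA
    obtain ⟨hAG, hxA⟩ := Finset.mem_filter.mp hA
    obtain ⟨F', hF', hAeq⟩ := hrep A hAG
    have hins : insert S0 F' ⊆ F := Finset.insert_subset hS0 hF'
    have hAu : A ∪ S0 = u (insert S0 F') := by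
      simp only [hu, Finset.sup_insert, id, hAeq]
      exact Finset.union_comm _ _
    refine Finset.mem_filter.mpr ⟨?_, ?_⟩
    · rw [hAu]
      exact Finset.mem_image.mpr ⟨insert S0 F', Finset.mem_powerset.mpr hins, rfl⟩
    · rw [hAu]
      exact (memsup _ hins S0 hS0).mpr (Finset.mem_insert_self _ _)
  have hinj : Set.InjOn (fun A => A ∪ S0) ↑Gc := by
    intro A hA B hB heq
    rw [Finset.mem_coe] at hA hB
    obtain ⟨hAG, hxA⟩ := Finset.mem_filter.mp hA
    obtain ⟨hBG, hxB⟩ := Finset.mem_filter.mp hB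
    obtain ⟨F', hF', hAeq⟩ := hrep A hAG
    obtain ⟨F'', hF'', hBeq⟩ := hrep B hBG
    have hS0A : S0 ∉ F' := fun hc => hxA (hAeq ▸ (memsup F' hF' S0 hS0).mpr hc)
    have hS0B : S0 ∉ F'' := fun hc => hxB (hBeq ▸ (memsup F'' hF'' S0 hS0).mpr hc)
    have hAu : A ∪ S0 = u (insert S0 F') := by
      simp only [hu, Finset.sup_insert, id, hAeq]; exact Finset.union_comm _ _
    have hBu : B ∪ S0 = u (insert S0 F'') := by
      simp only [hu, Finset.sup_insert, id, hBeq]; exact Finset.union_comm _ _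
    have heq' : u (insert S0 F') = u (insert S0 F'') := by
      rw [← hAu, ← hBu]; exact heq
    have hpow1 : insert S0 F' ∈ (↑F.powerset : Set (Finset (Finset α))) :=
      Finset.mem_coe.mpr (Finset.mem_powerset.mpr (Finset.insert_subset hS0 hF'))
    have hpow2 : insert S0 F'' ∈ (↑F.powerset : Set (Finset (Finset α))) :=
      Finset.mem_coe.mpr (Finset.mem_powerset.mpr (Finset.insert_subset hS0 hF''))
    have hins := uinj hpow1 hpow2 heq'
    have hFF : F' = F'' := by
      ext T
      constructor
      · intro hT
        have : T ∈ insert S0 F'' := hins ▸ Finset.mem_insert_of_mem hT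
        rcases Finset.mem_insert.mp this with h | h
        · exact absurd (h ▸ hT) hS0A
        · exact h
      · intro hT
        have : T ∈ insert S0 F' := hins ▸ Finset.mem_insert_of_mem hT
        rcases Finset.mem_insert.mp this with h | h
        · exact absurd (h ▸ hT) hS0B
        · exact h
    rw [hAeq, hBeq, hFF]
  have hcard : Gc.card ≤ Gx.card :=
    Finset.card_le_card_of_injOn _ hmap hinj
  have hsplit : Gx.card + Gc.card = G.card :=
    Finset.card_filter_add_card_filter_not _
  have hsets : {A ∈ genFam F | x ∈ A} = ↑Gx := by
    ext A
    simp only [Set.mem_setOf_eq, hgen, hGx, Finset.coe_filter, Finset.mem_coe]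
  rw [hsets, hgen, Set.ncard_coe_finset, Set.ncard_coe_finset]
  omega
end

section
/- Let F be a finite family of finite sets and A ∈ F a member set containing an element of frequency 1, such that every S ∈ F with S ∩ A ≠ ∅ contains an element of frequency 1 (in F). Then every element of A is abundant in ⟨F⟩: it lies in at least half of the members of the union-closed family generated by F. -/
theorem Set.ncard_le_two_mul_ncard_sep_of_injOn {β : Type*} {s : Set β} {p : β → Prop}
    (hs : s.Finite) (f : β → β) (hf : ∀ x ∈ s, ¬p x → f x ∈ s ∧ p (f x))
    (hinj : Set.InjOn f {x ∈ s | ¬p x}) :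
    s.ncard ≤ 2 * {x ∈ s | p x}.ncard := by
  have hsplit := Set.ncard_inter_add_ncard_sdiff_eq_ncard s {x | p x} hs
  have hle : {x ∈ s | ¬p x}.ncard ≤ {x ∈ s | p x}.ncard :=
    Set.ncard_le_ncard_of_injOn f (fun x hx => hf x hx.1 hx.2) hinj (hs.subset fun _ hx => hx.1)
  change {x ∈ s | p x}.ncard + {x ∈ s | ¬p x}.ncard = s.ncard at hsplit
  omega

section genFam

variable {α : Type*} [DecidableEq α] {F : Finset (Finset α)} {A B : Finset α}

theorem genFam_finite (F : Finset (Finset α)) : (genFam F).Finite :=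
  (F.powerset.finite_toSet.image fun F' => F'.sup id).subset fun _ ⟨F', hF', hB⟩ =>
    ⟨F', Finset.mem_powerset.2 hF', hB.symm⟩

theorem union_mem_genFam (hB : B ∈ genFam F) (hA : A ∈ F) : B ∪ A ∈ genFam F := by
  obtain ⟨F', hF', rfl⟩ := hB
  refine ⟨insert A F', Finset.insert_subset hA hF', ?_⟩
  rw [Finset.sup_insert, id]
  exact Finset.union_comm _ _

theorem exists_subset_of_mem_genFam (hB : B ∈ genFam F) {x : α} (hx : x ∈ B) :
    ∃ S ∈ F, S ⊆ B ∧ x ∈ S := by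
  obtain ⟨F', hF', rfl⟩ := hB
  obtain ⟨S, hS, hxS⟩ := Finset.mem_sup.1 hx
  exact ⟨S, hF' hS, Finset.le_sup (f := id) hS, hxS⟩

theorem eq_of_card_filter_mem_eq_one {y : α} (hy : (F.filter (fun T => y ∈ T)).card = 1)
    {S T : Finset α} (hS : S ∈ F) (hyS : y ∈ S) (hT : T ∈ F) (hyT : y ∈ T) : S = T :=
  Finset.card_le_one.1 hy.le S (Finset.mem_filter.2 ⟨hS, hyS⟩) T (Finset.mem_filter.2 ⟨hT, hyT⟩)

theorem subset_of_card_filter_mem_eq_one {y : α} (hy : (F.filter (fun T => y ∈ T)).card = 1)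
    {S : Finset α} (hS : S ∈ F) (hyS : y ∈ S) (hB : B ∈ genFam F) (hyB : y ∈ B) : S ⊆ B := by
  obtain ⟨T, hT, hTB, hyT⟩ := exists_subset_of_mem_genFam hB hyB
  rwa [eq_of_card_filter_mem_eq_one hy hS hyS hT hyT]

theorem subset_of_union_eq_union_of_not_subset (hA : A ∈ F)
    (hfreq : ∀ S ∈ F, (S ∩ A).Nonempty → ∃ x ∈ S, (F.filter (fun T => x ∈ T)).card = 1)
    {B' : Finset α} (hB : B ∈ genFam F) (hB' : B' ∈ genFam F) (hAB : ¬A ⊆ B)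
    (heq : B ∪ A = B' ∪ A) : B ⊆ B' := by
  have mem_of_mem : ∀ z ∈ B, z ∈ B' ∨ z ∈ A := fun z hz =>
    Finset.mem_union.1 (heq ▸ Finset.mem_union_left A hz)
  intro x hx
  obtain ⟨S, hS, hSB, hxS⟩ := exists_subset_of_mem_genFam hB hx
  by_cases hSA : (S ∩ A).Nonempty
  · obtain ⟨y, hyS, hy⟩ := hfreq S hS hSA
    rcases mem_of_mem y (hSB hyS) with hyB' | hyA
    · exact subset_of_card_filter_mem_eq_one hy hS hyS hB' hyB' hxS
    · exact absurd (eq_of_card_filter_mem_eq_one hy hA hyA hS hyS ▸ hSB) hAB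
  · exact (mem_of_mem x hx).resolve_right fun hxA => hSA ⟨x, Finset.mem_inter.2 ⟨hxS, hxA⟩⟩
end genFam

theorem stmt_17_general {α : Type*} [DecidableEq α] (F : Finset (Finset α)) (A : Finset α)
    (hA : A ∈ F)
    (hfreq : ∀ S ∈ F, (S ∩ A).Nonempty → ∃ x ∈ S, (F.filter (fun T => x ∈ T)).card = 1) :
    ∀ a ∈ A, Set.ncard (genFam F) ≤ 2 * Set.ncard {B ∈ genFam F | a ∈ B} := by
  intro a ha
  have not_subset : ∀ {B : Finset α}, a ∉ B → ¬A ⊆ B := fun haB hAB => haB (hAB ha)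
  refine Set.ncard_le_two_mul_ncard_sep_of_injOn (genFam_finite F) (· ∪ A)
    (fun B hB _ => ⟨union_mem_genFam hB hA, Finset.mem_union_right B ha⟩) ?_
  intro B hB B' hB' heq
  exact (subset_of_union_eq_union_of_not_subset hA hfreq hB.1 hB'.1 (not_subset hB.2) heq).antisymm
    (subset_of_union_eq_union_of_not_subset hA hfreq hB'.1 hB.1 (not_subset hB'.2) heq.symm)

theorem stmt_17 {α : Type*} [DecidableEq α] (F : Finset (Finset α)) (A : Finset α)
    (hA : A ∈ F) (hA1 : ∃ x ∈ A, (F.filter (fun T => x ∈ T)).card = 1)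
    (hfreq : ∀ S ∈ F, (S ∩ A).Nonempty → ∃ x ∈ S, (F.filter (fun T => x ∈ T)).card = 1) :
    ∀ a ∈ A, Set.ncard (genFam F) ≤ 2 * Set.ncard {B ∈ genFam F | a ∈ B} :=
  stmt_17_general F A hA hfreq
end

section
/- Let F be a finite union-closed family of finite sets with F ≠ {∅}, and suppose every nonempty set S in the universe U(F) has |S| ≥ |U(F)|/2 for every member S ∈ F. Then F has an abundant element: some x ∈ U(F) lies in at least |F|/2 members of F. -/
theorem stmt_18 {α : Type*} [DecidableEq α] (F : Finset (Finset α))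
    (hne : F.Nonempty) (hnt : F ≠ {∅})
    (huc : ∀ A ∈ F, ∀ B ∈ F, A ∪ B ∈ F)
    (hbig : ∀ S ∈ F, (F.sup id).card ≤ 2 * S.card) :
    ∃ x ∈ F.sup id, F.card ≤ 2 * (F.filter (fun S => x ∈ S)).card := by
  classical
  set U := F.sup id with hU
  have hsub : ∀ S ∈ F, S ⊆ U := fun S hS => Finset.le_sup (f := id) hS
  have hUne : U.Nonempty := by
    by_contra h
    rw [Finset.not_nonempty_iff_eq_empty] at h
    apply hnt
    apply Finset.eq_singleton_iff_nonempty_unique_mem.mpr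
    refine ⟨hne, fun S hS => Finset.subset_empty.mp ?_⟩
    exact h ▸ hsub S hS
  have key : ∑ x ∈ U, (F.filter (fun S => x ∈ S)).card = ∑ S ∈ F, S.card := by
    simp only [Finset.card_filter]
    rw [Finset.sum_comm]
    refine Finset.sum_congr rfl fun S hS => ?_
    rw [← Finset.card_filter, Finset.filter_mem_eq_inter,
      Finset.inter_eq_right.mpr (hsub S hS)]
  by_contra hcon
  push_neg at hcon
  have h2 : ∑ x ∈ U, 2 * (F.filter (fun S => x ∈ S)).card < ∑ x ∈ U, F.card :=
    Finset.sum_lt_sum_of_nonempty hUne fun x hx => by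
      have := hcon x hx; omega
  have h3 : ∑ x ∈ U, F.card ≤ ∑ S ∈ F, 2 * S.card := by
    calc ∑ x ∈ U, F.card = U.card * F.card := by rw [Finset.sum_const, smul_eq_mul]
    _ = ∑ S ∈ F, U.card := by rw [Finset.sum_const, smul_eq_mul, mul_comm]
    _ ≤ ∑ S ∈ F, 2 * S.card := Finset.sum_le_sum hbig
  have h4 : ∑ S ∈ F, 2 * S.card = ∑ x ∈ U, 2 * (F.filter (fun S => x ∈ S)).card := by
    rw [← Finset.mul_sum, ← Finset.mul_sum, key]
  omega
end
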